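/- arXiv:2407.01269 — 8 statements merged into one kernel-verified Lean document; each statement's English description precedes it below -/
import Mathlib

section
/- Let V be a lattice of (ℂ*)^n (i.e. Log maps V isomorphically onto a rank n−1 lattice in the trace-zero hyperplane) and C > 0. Then for almost every y ∈ ℂ^n (with respect to Lebesgue measure on ℂ^n ≅ ℝ^{2n}), the set of v ∈ V with |Tr(vy)| ≤ C‖v‖^{1/2} is finite. -/
/-!
Since `Log V` is a lattice in the trace-zero hyperplane, `log ‖v‖ ≥ c · |k|₁` for the element `v`
of `V` with coordinates `k ∈ ℤ^{n-1}`, so `∑_{v ∈ V} ‖v‖⁻¹ < ∞`. Inside a box of radius `R`, the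
set of `y` with `|Tr(vy)| ≤ C‖v‖^{1/2}` is a slab of volume `O(C² ‖v‖ / ‖v‖²) = O(‖v‖⁻¹)`
(solve for the coordinate where `|v_i| = ‖v‖`). Borel–Cantelli then shows that almost every `y`
lies in only finitely many of these slabs.
-/

open MeasureTheory Metric Finset Real

theorem summable_pi_prod_of_nonneg {ι κ : Type*} [Fintype ι] {g : κ → ℝ} (hg0 : ∀ a, 0 ≤ g a)
    (hg : Summable g) : Summable fun k : ι → κ => ∏ j, g (k j) := by
  classical
  refine summable_of_sum_le (c := (∑' a, g a) ^ Fintype.card ι)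
    (fun k => prod_nonneg fun j _ => hg0 _) fun s => ?_
  calc ∑ k ∈ s, ∏ j, g (k j)
      ≤ ∑ k ∈ Fintype.piFinset fun j => s.image (· j), ∏ j, g (k j) :=
        sum_le_sum_of_subset_of_nonneg
          (fun k hk => Fintype.mem_piFinset.2 fun j => mem_image_of_mem _ hk)
          (fun k _ _ => prod_nonneg fun j _ => hg0 _)
    _ = ∏ j, ∑ a ∈ s.image (· j), g a := (prod_univ_sum _ _).symm
    _ ≤ ∏ _j : ι, ∑' a, g a :=
        prod_le_prod (fun j _ => sum_nonneg fun a _ => hg0 a)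
          (fun j _ => hg.sum_le_tsum _ fun a _ => hg0 a)
    _ = (∑' a, g a) ^ Fintype.card ι := by rw [prod_const, card_univ]

theorem summable_exp_neg_mul_abs_int {c : ℝ} (hc : 0 < c) :
    Summable fun a : ℤ => exp (-c * |(a : ℝ)|) := by
  have h : Summable fun n : ℕ => exp (n * -c) := summable_exp_nat_mul_iff.2 (by linarith)
  refine Summable.of_nat_of_neg ?_ ?_ <;> refine h.congr fun n => ?_ <;> simp [mul_comm]

theorem exists_norm_le_card_mul_of_sum_eq_zero {ι : Type*} [Fintype ι] [Nonempty ι]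
    (x : ι → ℝ) (hx : ∑ i, x i = 0) : ∃ i, ‖x‖ ≤ Fintype.card ι * x i := by
  obtain ⟨i, hi⟩ := Finite.exists_max x
  have hcard : (1 : ℝ) ≤ Fintype.card ι := by exact_mod_cast Fintype.card_pos
  have hsum : ∑ j, (x i - x j) = Fintype.card ι * x i := by
    simp [sum_sub_distrib, hx, card_univ]
  have hxi : 0 ≤ Fintype.card ι * x i :=
    hsum ▸ sum_nonneg fun j _ => sub_nonneg.2 (hi j)
  refine ⟨i, (pi_norm_le_iff_of_nonneg hxi).2 fun j => abs_le.2 ⟨?_, ?_⟩⟩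
  · have := single_le_sum (f := fun j => x i - x j) (fun j _ => sub_nonneg.2 (hi j)) (mem_univ j)
    nlinarith [hi j]
  · nlinarith [hi j]

section LogAbs

variable {ι κ : Type*}

noncomputable def logAbs (z : ι → ℂ) : ι → ℝ := fun i => Real.log ‖z i‖

theorem logAbs_mul {z w : ι → ℂ} (hz : ∀ i, z i ≠ 0) (hw : ∀ i, w i ≠ 0) :
    logAbs (z * w) = logAbs z + logAbs w :=
  funext fun i => by
    simp only [logAbs, Pi.mul_apply, Pi.add_apply, norm_mul]
    exact Real.log_mul (norm_ne_zero_iff.2 (hz i)) (norm_ne_zero_iff.2 (hw i))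

variable [Fintype κ] [DecidableEq κ] {v : (κ → ℤ) → ι → ℂ}

theorem logAbs_eq_sum_smul (hmul : ∀ k l, v (k + l) = v k * v l) (hne : ∀ k i, v k i ≠ 0)
    (k : κ → ℤ) : logAbs (v k) = ∑ j, (k j : ℝ) • logAbs (v (Pi.single j 1)) := by
  let F : (κ → ℤ) →+ (ι → ℝ) := AddMonoidHom.mk' (fun k => logAbs (v k)) fun k l => by
    rw [hmul]; exact logAbs_mul (hne k) (hne l)
  calc logAbs (v k) = F (∑ j, Pi.single j (k j)) := by rw [univ_sum_single]; rfl
    _ = ∑ j, F (k j • Pi.single j 1) := by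
      rw [map_sum]; simp only [← Pi.single_smul, smul_eq_mul, mul_one]
    _ = ∑ j, (k j : ℝ) • logAbs (v (Pi.single j 1)) := by
      simp only [map_zsmul, Int.cast_smul_eq_zsmul]; rfl

variable [Fintype ι]

theorem norm_logAbs_le_card_mul_log_norm [Nonempty ι] {z : ι → ℂ} (hz : ∀ i, z i ≠ 0)
    (htrace : ∑ i, logAbs z i = 0) : ‖logAbs z‖ ≤ Fintype.card ι * Real.log ‖z‖ := by
  obtain ⟨i, hi⟩ := exists_norm_le_card_mul_of_sum_eq_zero _ htrace
  exact hi.trans (mul_le_mul_of_nonneg_left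
    (Real.log_le_log (norm_pos_iff.2 (hz i)) (norm_le_pi_norm z i)) (Nat.cast_nonneg _))

theorem exists_pos_mul_sum_abs_le_log_norm [Nonempty ι]
    (hmul : ∀ k l, v (k + l) = v k * v l) (hne : ∀ k i, v k i ≠ 0)
    (htrace : ∀ k, ∑ i, logAbs (v k) i = 0)
    (hind : LinearIndependent ℝ fun j => logAbs (v (Pi.single j 1))) :
    ∃ c > 0, ∀ k, c * ∑ j, |(k j : ℝ)| ≤ Real.log ‖v k‖ := by
  obtain ⟨K, hK, hKL⟩ := LinearMap.exists_antilipschitzWith _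
    (LinearMap.ker_eq_bot.2 hind.fintypeLinearCombination_injective)
  set M : ℝ := Fintype.card κ * K * Fintype.card ι
  refine ⟨(M + 1)⁻¹, by positivity, fun k => ?_⟩
  have hlog : 0 ≤ Real.log ‖v k‖ := by
    have := (norm_nonneg _).trans (norm_logAbs_le_card_mul_log_norm (hne k) (htrace k))
    exact (mul_nonneg_iff_of_pos_left (by positivity)).1 this
  have hbound : ∑ j, |(k j : ℝ)| ≤ M * Real.log ‖v k‖ :=
    calc ∑ j, |(k j : ℝ)| ≤ Fintype.card κ * ‖fun j => (k j : ℝ)‖ := by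
          simpa using sum_le_card_nsmul univ _ _ fun j _ => norm_le_pi_norm (fun j => (k j : ℝ)) j
      _ ≤ Fintype.card κ * (K * ‖logAbs (v k)‖) := by
          gcongr
          simpa [logAbs_eq_sum_smul hmul hne k, Fintype.linearCombination_apply] using
            ZeroHomClass.bound_of_antilipschitz _ hKL fun j => (k j : ℝ)
      _ ≤ Fintype.card κ * (K * (Fintype.card ι * Real.log ‖v k‖)) := by
          gcongr
          exact norm_logAbs_le_card_mul_log_norm (hne k) (htrace k)
      _ = M * Real.log ‖v k‖ := by ring
  rw [inv_mul_le_iff₀ (by positivity)]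
  nlinarith

theorem summable_inv_norm [Nonempty ι]
    (hmul : ∀ k l, v (k + l) = v k * v l) (hne : ∀ k i, v k i ≠ 0)
    (htrace : ∀ k, ∑ i, logAbs (v k) i = 0)
    (hind : LinearIndependent ℝ fun j => logAbs (v (Pi.single j 1))) :
    Summable fun k => ‖v k‖⁻¹ := by
  obtain ⟨c, hc, hgrowth⟩ := exists_pos_mul_sum_abs_le_log_norm hmul hne htrace hind
  refine (summable_pi_prod_of_nonneg (fun _ => (exp_pos _).le)
    (summable_exp_neg_mul_abs_int hc)).of_nonneg_of_le (fun k => inv_nonneg.2 (norm_nonneg _))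
    fun k => ?_
  have hv : 0 < ‖v k‖ := (norm_pos_iff.2 (hne k (Classical.arbitrary ι))).trans_le
    (norm_le_pi_norm _ _)
  calc ‖v k‖⁻¹ = exp (-Real.log ‖v k‖) := by rw [exp_neg, exp_log hv]
    _ ≤ exp (-(c * ∑ j, |(k j : ℝ)|)) := exp_le_exp.2 (neg_le_neg (hgrowth k))
    _ = ∏ j, exp (-c * |(k j : ℝ)|) := by rw [← exp_sum, mul_sum, ← sum_neg_distrib]; simp

end LogAbs

theorem MeasureTheory.Measure.prod_apply_le_of_forall_slice_le {α β : Type*}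
    [MeasurableSpace α] [MeasurableSpace β] {μ : Measure α} {ν : Measure β} [SFinite μ]
    [SFinite ν] {s : Set (α × β)} (hs : MeasurableSet s) {c : ENNReal} {t : Set β}
    (hslice : ∀ y, μ ((fun x => (x, y)) ⁻¹' s) ≤ c) (hst : ∀ p ∈ s, p.2 ∈ t) :
    μ.prod ν s ≤ c * ν t := by
  rw [Measure.prod_apply_symm hs]
  refine (lintegral_mono fun y => ?_).trans (lintegral_indicator_const_le t c)
  by_cases hy : y ∈ t
  · simpa [hy] using hslice y
  · have : (fun x => (x, y)) ⁻¹' s = ∅ :=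
      Set.eq_empty_of_forall_notMem fun x hx => hy (hst _ hx)
    simp [this]

theorem volume_setOf_norm_sum_mul_le_inter_closedBall_le {m : ℕ} (a : Fin (m + 1) → ℂ)
    {i : Fin (m + 1)} (ha : a i ≠ 0) (ε : ℝ) {R : ℝ} (hR : 0 ≤ R) :
    volume ({y : Fin (m + 1) → ℂ | ‖∑ j, a j * y j‖ ≤ ε} ∩ closedBall 0 R) ≤
      ENNReal.ofReal ((ε / ‖a i‖) ^ 2) * NNReal.pi * (ENNReal.ofReal R ^ 2 * NNReal.pi) ^ m := by
  set S := {y : Fin (m + 1) → ℂ | ‖∑ j, a j * y j‖ ≤ ε} ∩ closedBall 0 R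
  have hS : MeasurableSet S :=
    (measurableSet_le (by fun_prop) measurable_const).inter measurableSet_closedBall
  let e := MeasurableEquiv.piFinSuccAbove (fun _ => ℂ) i
  have hsum : ∀ z w, ∑ j, a j * e.symm (z, w) j =
      a i * (z + (∑ j, a (i.succAbove j) * w j) / a i) := by
    intro z w
    simp only [e, MeasurableEquiv.piFinSuccAbove_symm_apply, Fin.insertNthEquiv_apply,
      Fin.sum_univ_succAbove _ i, Fin.insertNth_apply_same, Fin.insertNth_apply_succAbove]
    field_simp
  have hslice : ∀ w, volume ((fun z => (z, w)) ⁻¹' (e.symm ⁻¹' S)) ≤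
      ENNReal.ofReal ((ε / ‖a i‖) ^ 2) * NNReal.pi := by
    intro w
    set b := ∑ j, a (i.succAbove j) * w j
    have hpos : 0 < ‖a i‖ := norm_pos_iff.2 ha
    have hsub : (fun z => (z, w)) ⁻¹' (e.symm ⁻¹' S) ⊆ closedBall (-(b / a i)) (ε / ‖a i‖) := by
      intro z hz
      have hz : ‖a i‖ * ‖z + b / a i‖ ≤ ε := by simpa [S, hsum, norm_mul] using hz.1
      rw [mem_closedBall, dist_eq_norm, sub_neg_eq_add, le_div_iff₀ hpos]
      linarith
    refine (measure_mono hsub).trans ?_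
    rw [Complex.volume_closedBall]
    gcongr
    rcases le_or_gt 0 (ε / ‖a i‖) with h | h
    · rw [ENNReal.ofReal_pow h]
    · simp [ENNReal.ofReal_of_nonpos h.le]
  have hball : ∀ p ∈ e.symm ⁻¹' S, p.2 ∈ closedBall (0 : Fin m → ℂ) R := by
    rintro ⟨z, w⟩ ⟨-, hzw⟩
    rw [mem_closedBall_zero_iff, pi_norm_le_iff_of_nonneg hR] at hzw ⊢
    intro j
    simpa [e, MeasurableEquiv.piFinSuccAbove_symm_apply] using hzw (i.succAbove j)
  calc volume S = volume.prod volume (e.symm ⁻¹' S) := by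
        rw [← Measure.volume_eq_prod,
          (volume_preserving_piFinSuccAbove (fun _ => ℂ) i).symm.measure_preimage
            hS.nullMeasurableSet]
    _ ≤ ENNReal.ofReal ((ε / ‖a i‖) ^ 2) * NNReal.pi * volume (closedBall (0 : Fin m → ℂ) R) :=
        Measure.prod_apply_le_of_forall_slice_le (e.symm.measurable hS) hslice hball
    _ = _ := by
        rw [MeasureTheory.volume_pi_closedBall _ hR]
        simp

theorem exists_norm_eq_norm_apply {ι E : Type*} [Fintype ι] [Nonempty ι] [SeminormedAddGroup E]
    (x : ι → E) : ∃ i, ‖x‖ = ‖x i‖ := by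
  obtain ⟨i, hi⟩ := Finite.exists_max fun i => ‖x i‖
  exact ⟨i, le_antisymm ((pi_norm_le_iff_of_nonneg (norm_nonneg _)).2 hi) (norm_le_pi_norm x i)⟩

theorem ae_finite_setOf_norm_sum_mul_le {κ : Type*} [Countable κ] {m : ℕ}
    (a : κ → Fin (m + 1) → ℂ) (ha : ∀ k, a k ≠ 0) (ε : κ → ℝ)
    (hε : Summable fun k => (ε k / ‖a k‖) ^ 2) :
    ∀ᵐ y : Fin (m + 1) → ℂ, {k | ‖∑ j, a k j * y j‖ ≤ ε k}.Finite := by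
  have hbox : ∀ R : ℕ, ∀ᵐ y : Fin (m + 1) → ℂ,
      {k | y ∈ {y | ‖∑ j, a k j * y j‖ ≤ ε k} ∩ closedBall 0 (R : ℝ)}.Finite := by
    intro R
    refine ae_finite_setOfPred_mem (ne_top_of_le_ne_top ?_ (ENNReal.tsum_le_tsum
      (g := fun k => ENNReal.ofReal ((ε k / ‖a k‖) ^ 2) * NNReal.pi *
        (ENNReal.ofReal R ^ 2 * NNReal.pi) ^ m) fun k => ?_))
    · rw [ENNReal.tsum_mul_right, ENNReal.tsum_mul_right,
        ← ENNReal.ofReal_tsum_of_nonneg (fun k => sq_nonneg _) hε]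
      finiteness
    · obtain ⟨i, hi⟩ := exists_norm_eq_norm_apply (a k)
      have hai : a k i ≠ 0 := fun h => ha k (norm_eq_zero.1 (by rw [hi, h, norm_zero]))
      rw [hi]
      exact volume_setOf_norm_sum_mul_le_inter_closedBall_le (a k) hai (ε k) R.cast_nonneg
  filter_upwards [ae_all_iff.2 hbox] with y hy
  obtain ⟨R, hR⟩ := exists_nat_ge ‖y‖
  exact (hy R).subset fun k hk => ⟨hk, mem_closedBall_zero_iff.2 hR⟩

theorem ae_finite_small_trace_complex_lattice_general
    (n : ℕ) (hn : 2 ≤ n)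
    (v : (Fin (n - 1) → ℤ) → (Fin n → ℂ))
    (hmul : ∀ k l, v (k + l) = v k * v l)
    (hne : ∀ k i, v k i ≠ 0)
    (htrace : ∀ k, ∑ i, Real.log ‖v k i‖ = 0)
    (hind : LinearIndependent ℝ
      (fun j : Fin (n - 1) => fun i : Fin n => Real.log ‖v (Pi.single j 1) i‖))
    (C : ℝ) :
    ∀ᵐ y : Fin n → ℂ ∂MeasureTheory.volume,
      {k : Fin (n - 1) → ℤ |
        ‖∑ i, v k i * y i‖ ≤ C * ‖v k‖ ^ ((1 : ℝ) / 2)}.Finite := by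
  obtain ⟨m, rfl⟩ : ∃ m, n = m + 1 := ⟨n - 1, by omega⟩
  refine ae_finite_setOf_norm_sum_mul_le v (fun k h => hne k 0 (congrFun h 0)) _ ?_
  refine ((summable_inv_norm hmul hne htrace hind).mul_left (C ^ 2)).congr fun k => ?_
  have hv : 0 < ‖v k‖ := (norm_pos_iff.2 (hne k 0)).trans_le (norm_le_pi_norm _ _)
  rw [div_pow, mul_pow, ← Real.sqrt_eq_rpow, Real.sq_sqrt hv.le]
  field_simp

/-- Let `V` be a lattice of `(ℂ*)^n` (parametrized as the image of a
multiplicative map `v` on `ℤ^{n-1}`, with nonzero coordinates, logarithms in the trace-zero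
hyperplane, and linearly independent logs of the generators) and `C > 0`. Then for almost
every `y ∈ ℂ^n`, the set of `v ∈ V` with `|Tr(vy)| ≤ C ‖v‖^{1/2}` is finite. -/
theorem ae_finite_small_trace_complex_lattice
    (n : ℕ) (hn : 2 ≤ n)
    (v : (Fin (n - 1) → ℤ) → (Fin n → ℂ))
    (hmul : ∀ k l, v (k + l) = v k * v l)
    (hne : ∀ k i, v k i ≠ 0)
    (htrace : ∀ k, ∑ i, Real.log ‖v k i‖ = 0)
    (hind : LinearIndependent ℝ
      (fun j : Fin (n - 1) => fun i : Fin n => Real.log ‖v (Pi.single j 1) i‖))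
    (C : ℝ) (hC : 0 < C) :
    ∀ᵐ y : Fin n → ℂ ∂MeasureTheory.volume,
      {k : Fin (n - 1) → ℤ |
        ‖∑ i, v k i * y i‖ ≤ C * ‖v k‖ ^ ((1 : ℝ) / 2)}.Finite :=
  ae_finite_small_trace_complex_lattice_general n hn v hmul hne htrace hind C
end

section
/- Let f_0, f_1, …, f_n be vectors in ℂ^n such that each of the n+1 families obtained by removing one f_i is a basis of ℂ^n. For a basis B = (g_1,…,g_n) define the meromorphic function g_B(z) = det(B) / (Tr(g_1 z) ⋯ Tr(g_n z)) where Tr(g z) = ∑_i g_i z_i. Then ∑_{i=0}^{n} (−1)^i g_{(f_0,…,f̂_i,…,f_n)}(z) = 0 for every z where all the terms are defined. -/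
/-!
Let `F` be the `(n + 1) × n` matrix with rows `f_i`. Bordering `F` by the column
`(Tr(f_i z))_i = F z` gives a singular square matrix, since the new column is a combination of the
others. Expanding its determinant along that column gives
`∑ (-1)^i Tr(f_i z) det(f_0, …, f̂_i, …, f_n) = 0`, and dividing by `∏_i Tr(f_i z)` gives the
cocycle relation.
-/

open Matrix

section MinorExpansion

variable {R : Type*} [CommRing R] {n : ℕ}

theorem Matrix.det_of_cons_eq_sum_det_submatrix_succAbove
    (w : Fin (n + 1) → R) (M : Matrix (Fin (n + 1)) (Fin n) R) :
    (Matrix.of fun i => (Fin.cons (w i) (M i) : Fin (n + 1) → R)).det =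
      ∑ i : Fin (n + 1), (-1) ^ (i : ℕ) * w i * (M.submatrix i.succAbove id).det := by
  rw [det_succ_column_zero]
  rfl

theorem Matrix.det_of_cons_mulVec_eq_zero
    (M : Matrix (Fin (n + 1)) (Fin n) R) (c : Fin n → R) :
    (Matrix.of fun i => (Fin.cons ((M *ᵥ c) i) (M i) : Fin (n + 1) → R)).det = 0 := by
  set A := Matrix.of fun i => (Fin.cons ((M *ᵥ c) i) (M i) : Fin (n + 1) → R)
  have hcol : A.updateCol 0 (fun k => ∑ j, (Fin.cons 0 c : Fin (n + 1) → R) j • A k j) = A := by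
    ext i j
    refine Fin.cases ?_ (fun _ => ?_) j
    · simp [A, Fin.sum_univ_succ, mulVec, dotProduct, mul_comm]
    · rw [updateCol_ne (Fin.succ_ne_zero _)]
  -- column `0` is already `∑ c k • column (k + 1)`, so `det A = 0 • det A`
  have h := det_updateCol_sum A 0 (Fin.cons 0 c)
  rw [hcol] at h
  simpa using h

theorem Matrix.sum_neg_one_pow_mul_mulVec_mul_det_submatrix_succAbove
    (M : Matrix (Fin (n + 1)) (Fin n) R) (c : Fin n → R) :
    ∑ i : Fin (n + 1), (-1) ^ (i : ℕ) * (M *ᵥ c) i * (M.submatrix i.succAbove id).det = 0 := by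
  rw [← det_of_cons_eq_sum_det_submatrix_succAbove, det_of_cons_mulVec_eq_zero]

end MinorExpansion

theorem Fin.sum_div_prod_succAbove {K : Type*} [Field K] {n : ℕ}
    (a T : Fin (n + 1) → K) (hT : ∀ i, T i ≠ 0) :
    ∑ i, a i / ∏ j, T (i.succAbove j) = (∑ i, a i * T i) / ∏ i, T i := by
  rw [Finset.sum_div]
  refine Finset.sum_congr rfl fun i _ => ?_
  rw [Fin.prod_univ_succAbove T i, mul_comm (T i), mul_div_mul_right _ _ (hT i)]

theorem shintani_cocycle_relation_general
    (n : ℕ) (f : Fin (n + 1) → Fin n → ℂ)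
    (z : Fin n → ℂ) (hz : ∀ i : Fin (n + 1), ∑ k, f i k * z k ≠ 0) :
    ∑ i : Fin (n + 1), (-1 : ℂ) ^ (i : ℕ) *
      ((Matrix.of fun j k : Fin n => f (i.succAbove j) k).det /
        ∏ j : Fin n, ∑ k, f (i.succAbove j) k * z k) = 0 := by
  set T : Fin (n + 1) → ℂ := fun i => ∑ k, f i k * z k
  set D : Fin (n + 1) → ℂ := fun i => (Matrix.of fun j k : Fin n => f (i.succAbove j) k).det
  have hminors : ∑ i : Fin (n + 1), (-1) ^ (i : ℕ) * T i * D i = 0 :=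
    sum_neg_one_pow_mul_mulVec_mul_det_submatrix_succAbove (Matrix.of f) z
  calc _ = ∑ i : Fin (n + 1), (-1) ^ (i : ℕ) * D i / ∏ j, T (i.succAbove j) := by
        simp only [mul_div_assoc, T, D]
    _ = (∑ i : Fin (n + 1), (-1) ^ (i : ℕ) * D i * T i) / ∏ i, T i :=
        Fin.sum_div_prod_succAbove _ T hz
    _ = 0 := by simp only [mul_right_comm _ (D _), hminors, zero_div]

/-- the `n`-cocycle relation for `B ↦ g_B`. If `f_0, …, f_n ∈ ℂ^n` are such that
each family obtained by omitting one vector is a basis, and `z` is such that all the terms are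
defined (`Tr(f_i z) ≠ 0` for all `i`), then
`∑_{i=0}^{n} (-1)^i g_{(f_0,…,f̂_i,…,f_n)}(z) = 0`, where
`g_B(z) = det B / ∏_j Tr(g_j z)`. -/
theorem shintani_cocycle_relation
    (n : ℕ) (f : Fin (n + 1) → Fin n → ℂ)
    (hbasis : ∀ i : Fin (n + 1),
      LinearIndependent ℂ (fun j : Fin n => f (i.succAbove j)))
    (z : Fin n → ℂ) (hz : ∀ i : Fin (n + 1), ∑ k, f i k * z k ≠ 0) :
    ∑ i : Fin (n + 1), (-1 : ℂ) ^ (i : ℕ) *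
      ((Matrix.of fun j k : Fin n => f (i.succAbove j) k).det /
        ∏ j : Fin n, ∑ k, f (i.succAbove j) k * z k) = 0 :=
  shintani_cocycle_relation_general n f z hz
end

section
/- Let B = (f_1,…,f_n) be a basis of ℝ^n and v ∈ (ℝ*)^n with |∏_i v_i| = 1 and v_n > 0. Define χ_B(x,y) = lim_{t→0^+} χ_B^0(x + t e_n, y), where χ_B^0(x,y) = ε(B,y)·𝟙_{C_B^0(y)}(x), with C_B^0(y) the open cone generated by the vectors ε(Tr(f_i y)) f_i and ε(B,y) = ε(det B) ∏_i ε(Tr(f_i y)). Then χ_{vB}(x,y) = N(v)·χ_B(v^{−1}x, vy), where vB = (v f_1,…,v f_n) (componentwise products), N(v) = ∏_i v_i, v^{−1}x = (x_1/v_1,…,x_n/v_n), and vy = (v_1 y_1,…,v_n y_n). -/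
open scoped BigOperators Classical

/-- The function `χ_B^0(x,y) = ε(B,y) 𝟙_{C_B^0(y)}(x)`, where `C_B^0(y)` is the open cone
generated by the vectors `ε(Tr(f_i y)) f_i` and
`ε(B,y) = ε(det B) ∏_i ε(Tr(f_i y))`. -/
noncomputable def chiZero (n : ℕ) (f : Fin n → Fin n → ℝ) (x y : Fin n → ℝ) : ℝ :=
  if ∃ c : Fin n → ℝ, (∀ i, 0 < c i) ∧
      x = ∑ i, c i • (Real.sign (∑ k, f i k * y k) • f i)
  then Real.sign (Matrix.of f).det * ∏ i, Real.sign (∑ k, f i k * y k)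
  else 0

/-- `χ_B(x,y) = lim_{t→0⁺} χ_B^0(x + t e_n, y)`. -/
noncomputable def chiLim (m : ℕ) (f : Fin (m + 1) → Fin (m + 1) → ℝ)
    (x y : Fin (m + 1) → ℝ) : ℝ :=
  Filter.limUnder (nhdsWithin (0 : ℝ) (Set.Ioi 0))
    (fun t : ℝ => chiZero (m + 1) f (x + t • (Pi.single (Fin.last m) (1 : ℝ) : Fin (m + 1) → ℝ)) y)

/-!
Multiplying coordinatewise by `v` maps the open cone spanned by the `f i` onto the one spanned by
the `v * f i`, turns `Tr(f_i · vy)` into `Tr(v f_i · y)`, and multiplies the determinant by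
`N(v) = ±1`; hence `χ⁰_{vB}(x, y) = N(v) χ⁰_B(v⁻¹x, vy)` pointwise. Along the ray `x + t eₙ` the
function `χ⁰` is eventually constant as `t → 0⁺`, because the cone is convex and so the set of
times at which the ray lies in it is an interval. Finally `v⁻¹(x + t eₙ) = v⁻¹x + (t / vₙ) eₙ`,
and `t / vₙ → 0⁺` because `vₙ > 0`.
-/

open Filter Topology

lemma Real.sign_mul_of_abs_eq_one (a : ℝ) {u : ℝ} (hu : |u| = 1) :
    Real.sign (a * u) = Real.sign a * u := by
  rcases (abs_eq zero_le_one).mp hu with rfl | rfl <;> simp [Real.sign_neg]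

lemma Matrix.det_of_mul_cols {n : ℕ} (f : Fin n → Fin n → ℝ) (v : Fin n → ℝ) :
    (Matrix.of fun i k => v k * f i k).det = (Matrix.of f).det * ∏ k, v k := by
  have : (Matrix.of fun i k => v k * f i k) = Matrix.of f * Matrix.diagonal v := by
    ext i k
    simp [Matrix.mul_diagonal, mul_comm]
  rw [this, Matrix.det_mul, Matrix.det_diagonal]

/-- Stated with an explicit witness so that membership is literally the condition in `chiZero`. -/
def openCone {ι E : Type*} [Fintype ι] [AddCommMonoid E] [Module ℝ E] (g : ι → E) : Set E :=
  {x | ∃ c : ι → ℝ, (∀ i, 0 < c i) ∧ x = ∑ i, c i • g i}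

lemma convex_openCone {ι E : Type*} [Fintype ι] [AddCommMonoid E] [Module ℝ E] (g : ι → E) :
    Convex ℝ (openCone g) := by
  have : openCone g = Fintype.linearCombination ℝ g '' Set.univ.pi fun _ => Set.Ioi 0 := by
    ext x
    simp [openCone, Fintype.linearCombination_apply, eq_comm]
  rw [this]
  exact (convex_pi fun _ _ => convex_Ioi 0).linear_image _

lemma mem_openCone_mul_iff {n : ℕ} {v : Fin n → ℝ} (hv : ∀ k, v k ≠ 0) (g : Fin n → Fin n → ℝ)
    (x : Fin n → ℝ) : x ∈ openCone (fun i => v * g i) ↔ x / v ∈ openCone g := by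
  refine exists_congr fun c => and_congr_right fun _ => ?_
  simp only [funext_iff, Pi.div_apply, Finset.sum_apply, Pi.smul_apply, Pi.mul_apply, smul_eq_mul,
    div_eq_iff (hv _)]
  refine forall_congr' fun k => ?_
  rw [Finset.sum_mul]
  congr! 2 with i
  ring

lemma Convex.ordConnected_add_smul_preimage {E : Type*} [AddCommGroup E] [Module ℝ E] {s : Set E}
    (hs : Convex ℝ s) (x e : E) : {t : ℝ | x + t • e ∈ s}.OrdConnected := by
  have : {t : ℝ | x + t • e ∈ s} = AffineMap.lineMap x (x + e) ⁻¹' s := by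
    ext t
    simp [AffineMap.lineMap_apply, add_comm]
  exact this ▸ (hs.affine_preimage _).ordConnected

lemma Set.OrdConnected.eventually_mem_or_eventually_notMem {T : Set ℝ} (hT : T.OrdConnected)
    (a : ℝ) : (∀ᶠ t in 𝓝[>] a, t ∈ T) ∨ ∀ᶠ t in 𝓝[>] a, t ∉ T := by
  refine or_iff_not_imp_right.mpr fun h => ?_
  have h : ∃ᶠ t in 𝓝[>] a, t ∈ T := by simpa [Filter.not_eventually] using h
  obtain ⟨t₀, ht₀T, ht₀⟩ := (h.and_eventually self_mem_nhdsWithin).exists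
  filter_upwards [Ioo_mem_nhdsGT ht₀] with t ht
  obtain ⟨t₁, ht₁T, ht₁⟩ := (h.and_eventually (Ioo_mem_nhdsGT ht.1)).exists
  exact hT.out ht₁T ht₀T ⟨ht₁.2.le, ht.2.le⟩

lemma add_smul_single_div {n : ℕ} (x v : Fin n → ℝ) (j : Fin n) (t : ℝ) :
    (x + t • Pi.single j 1) / v = x / v + (t / v j) • Pi.single j 1 := by
  ext k
  rcases eq_or_ne k j with rfl | hk <;> simp [*, add_div]

lemma chiZero_mul {n : ℕ} (f : Fin n → Fin n → ℝ) {v : Fin n → ℝ} (hv : ∀ k, v k ≠ 0)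
    (hN : |∏ k, v k| = 1) (x y : Fin n → ℝ) :
    chiZero n (fun i k => v k * f i k) x y = (∏ k, v k) * chiZero n f (x / v) (v * y) := by
  have hTr : ∀ i, ∑ k, v k * f i k * y k = ∑ k, f i k * (v * y) k := fun i =>
    Finset.sum_congr rfl fun k _ => by simp only [Pi.mul_apply]; ring
  have hcone : (fun i => Real.sign (∑ k, f i k * (v * y) k) • fun k => v k * f i k) =
      fun i => v * (Real.sign (∑ k, f i k * (v * y) k) • f i) := by
    ext i k
    simp only [Pi.smul_apply, Pi.mul_apply, smul_eq_mul]
    ring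
  unfold chiZero
  simp only [hTr]
  change ite (x ∈ openCone _) _ _ = _ * ite (x / v ∈ openCone _) _ _
  rw [hcone, mem_openCone_mul_iff hv, Matrix.det_of_mul_cols,
    Real.sign_mul_of_abs_eq_one _ hN]
  split_ifs <;> ring

lemma exists_chiZero_add_smul_eventuallyEq_const {n : ℕ} (f : Fin n → Fin n → ℝ)
    (x y e : Fin n → ℝ) (a : ℝ) :
    ∃ c : ℝ, (fun t : ℝ => chiZero n f (x + t • e) y) =ᶠ[𝓝[>] a] fun _ => c := by
  have hT := (convex_openCone fun i => Real.sign (∑ k, f i k * y k) • f i)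
    |>.ordConnected_add_smul_preimage x e
  rcases hT.eventually_mem_or_eventually_notMem a with h | h
  · exact ⟨_, h.mono fun t ht => if_pos ht⟩
  · exact ⟨0, h.mono fun t ht => if_neg ht⟩

lemma chiLim_eq_of_eventuallyEq {m : ℕ} {f : Fin (m + 1) → Fin (m + 1) → ℝ}
    {x y : Fin (m + 1) → ℝ} {c : ℝ}
    (h : (fun t : ℝ => chiZero (m + 1) f (x + t • Pi.single (Fin.last m) 1) y)
      =ᶠ[𝓝[>] 0] fun _ => c) : chiLim m f x y = c :=
  (tendsto_const_nhds.congr' h.symm).limUnder_eq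

theorem chiLim_smul_eq_general
    (m : ℕ) (f : Fin (m + 1) → Fin (m + 1) → ℝ)
    (v : Fin (m + 1) → ℝ) (hv : ∀ i, v i ≠ 0)
    (hN : |∏ i, v i| = 1) (hvn : 0 < v (Fin.last m))
    (x y : Fin (m + 1) → ℝ) :
    chiLim m (fun i k => v k * f i k) x y
      = (∏ i, v i) * chiLim m f (fun k => x k / v k) (fun k => v k * y k) := by
  obtain ⟨c, hc⟩ := exists_chiZero_add_smul_eventuallyEq_const f (x / v) (v * y)
    (Pi.single (Fin.last m) 1) 0
  change _ = _ * chiLim m f (x / v) (v * y)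
  rw [chiLim_eq_of_eventuallyEq (f := f) hc, chiLim_eq_of_eventuallyEq (c := (∏ i, v i) * c)]
  filter_upwards [eventually_nhdsGT_zero_mul_left (inv_pos.mpr hvn) hc] with t ht
  rw [chiZero_mul f hv hN, add_smul_single_div, div_eq_inv_mul t, ht]

/-- if `B = (f_1,…,f_n)` is a basis of `ℝ^n` and `v ∈ (ℝ*)^n` satisfies
`|N(v)| = 1` and `v_n > 0`, then (whenever `Tr(f_i vy) ≠ 0` for all `i`)
`χ_{vB}(x,y) = N(v) · χ_B(v^{-1}x, vy)`. -/
theorem chiLim_smul_eq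
    (m : ℕ) (f : Fin (m + 1) → Fin (m + 1) → ℝ)
    (hli : LinearIndependent ℝ f)
    (v : Fin (m + 1) → ℝ) (hv : ∀ i, v i ≠ 0)
    (hN : |∏ i, v i| = 1) (hvn : 0 < v (Fin.last m))
    (x y : Fin (m + 1) → ℝ)
    (hy : ∀ i, ∑ k, (v k * f i k) * y k ≠ 0) :
    chiLim m (fun i k => v k * f i k) x y
      = (∏ i, v i) * chiLim m f (fun k => x k / v k) (fun k => v k * y k) :=
  chiLim_smul_eq_general m f v hv hN hvn x y
end

section
/- Let B = (f_1,…,f_n) and its dual B^∨ = (f_1^∨,…,f_n^∨) be bases of ℝ^n all of whose n×n matrices have the property that every square minor is nonzero (condition 𝒰). Then there exists c(B) > 0 such that: for all x, y ∈ (ℝ*)^n and all v ∈ (ℝ*)^n with |∏_i v_i| = 1, if χ_{vB}(x,y) ≠ 0 then either ‖v‖ < c(B)·sup_i(‖y‖²/|y_i|²) or ‖v^{−1}‖ < c(B)·sup_i(‖x‖²/|x_i|²). -/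
/-!
Write `t = F (v y)` and `c = F^∨ (v⁻¹ x)` for the coordinates `Tr(v f_i y)` and
`Tr(v⁻¹ f_i^∨ x)`. If `χ_{vB}(x,y) ≠ 0`, then `c` is the coefficient vector of `x` in `vB` and has
the sign pattern of `t`, so each `t_i c_i` is nonnegative and bounded by
`∑ t_i c_i = Tr(xy) ≤ n ‖x y‖`. If both norm bounds failed, `w = v y` and `u = v⁻¹ x` would satisfy
`‖w‖ ‖u‖ ≫ ‖w u‖ = ‖x y‖`. Let `T` be the set of coordinates where `|w_k|` is comparable to `‖w‖`;
then `|u_k|` is small on `T` and attains `‖u‖` off `T`. Because every square submatrix of `F` and of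
`F^∨` is invertible, `|(F w)_i|` is of size `‖w‖` for all but fewer than `#T` indices, and
`|(F^∨ u)_i|` is of size `‖u‖` for all but fewer than `n - #T` of them. Some index `i` escapes both
exceptional sets, and there `t_i c_i` exceeds `n ‖x y‖`.
-/

open scoped BigOperators Classical

/-- The signed indicator `χ_B(x,y)` of the half-open simplicial cone
`C_B(y) = ∑_i ℝ(ε(Tr(f_i y))) f_i` (with `ℝ(+1) = ℝ_{≥0}`, `ℝ(-1) = ℝ_{<0}`),
with value `ε(det B) ∏_i ε(Tr(f_i y))` on the cone and `0` elsewhere. -/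
noncomputable def chiHalf (n : ℕ) (f : Fin n → Fin n → ℝ) (x y : Fin n → ℝ) : ℝ :=
  if ∃ c : Fin n → ℝ,
      (∀ i, if 0 < ∑ k, f i k * y k then 0 ≤ c i else c i < 0) ∧
      x = ∑ i, c i • f i
  then Real.sign (Matrix.of f).det * ∏ i, Real.sign (∑ k, f i k * y k)
  else 0

open Matrix Finset

/-- Condition `𝒰` of the paper. -/
def Matrix.AllMinorsNeZero {R : Type*} [CommRing R] {n : ℕ} (A : Matrix (Fin n) (Fin n) R) :
    Prop :=
  ∀ (k : ℕ) (r c : Fin k → Fin n), Function.Injective r → Function.Injective c →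
    (A.submatrix r c).det ≠ 0

section MinorBounds

attribute [local instance] Matrix.linftyOpNormedAddCommGroup

lemma exists_norm_le_mul_norm_mulVec_comp {l m p : Type*} [Fintype l] [DecidableEq l] [Fintype p] (A : Matrix m p ℝ) (r : l → m) {c : l → p} (hc : Function.Injective c)
    (hA : (A.submatrix r c).det ≠ 0) :
    ∃ K, 0 ≤ K ∧ ∀ w : p → ℝ, (∀ k ∉ Set.range c, w k = 0) → ‖w‖ ≤ K * ‖(A *ᵥ w) ∘ r‖ := by
  set M := A.submatrix r c
  refine ⟨‖M⁻¹‖, norm_nonneg _, fun w hw => ?_⟩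
  have hMw : M *ᵥ (w ∘ c) = (A *ᵥ w) ∘ r := by
    ext j
    exact Fintype.sum_of_injective c hc _ _ (fun k hk => by simp [hw k hk]) fun _ => rfl
  have hw_le : ‖w‖ ≤ ‖w ∘ c‖ := by
    refine (pi_norm_le_iff_of_nonneg (norm_nonneg _)).2 fun k => ?_
    by_cases hk : k ∈ Set.range c
    · obtain ⟨j, rfl⟩ := hk
      exact norm_le_pi_norm (w ∘ c) j
    · simp [hw k hk]
  calc ‖w‖ ≤ ‖w ∘ c‖ := hw_le
    _ = ‖M⁻¹ *ᵥ (M *ᵥ (w ∘ c))‖ := by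
      rw [mulVec_mulVec, nonsing_inv_mul _ hA.isUnit, one_mulVec]
    _ ≤ ‖M⁻¹‖ * ‖(A *ᵥ w) ∘ r‖ := hMw ▸ linfty_opNorm_mulVec _ _

variable {n : ℕ}

lemma Matrix.AllMinorsNeZero.exists_norm_le_mul_norm_restrict_mulVec
    {A : Matrix (Fin n) (Fin n) ℝ} (hA : A.AllMinorsNeZero) {S T : Finset (Fin n)} (hST : #S = #T) :
    ∃ K, 0 ≤ K ∧ ∀ w : Fin n → ℝ, (∀ k ∉ T, w k = 0) → ‖w‖ ≤ K * ‖S.restrict (A *ᵥ w)‖ := by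
  set r := S.orderEmbOfFin rfl
  set c := T.orderEmbOfFin hST.symm
  obtain ⟨K, hK, hKw⟩ := exists_norm_le_mul_norm_mulVec_comp A r c.injective
    (hA _ r c r.injective c.injective)
  refine ⟨K, hK, fun w hw => (hKw w fun k hk => hw k ?_).trans ?_⟩
  · simpa [c, range_orderEmbOfFin] using hk
  · exact mul_le_mul_of_nonneg_left
      (pi_norm_comp_le (S.restrict (A *ᵥ w)) fun j => ⟨r j, orderEmbOfFin_mem S rfl j⟩) hK

lemma Matrix.AllMinorsNeZero.exists_norm_restrict_le {A : Matrix (Fin n) (Fin n) ℝ}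
    (hA : A.AllMinorsNeZero) :
    ∃ K C : ℝ, 0 ≤ K ∧ 0 ≤ C ∧ ∀ S T : Finset (Fin n), #S = #T → ∀ w : Fin n → ℝ,
      ‖T.restrict w‖ ≤ K * ‖S.restrict (A *ᵥ w)‖ + C * ‖Tᶜ.restrict w‖ := by
  choose K hK0 hK using fun p : {p : Finset (Fin n) × Finset (Fin n) // #p.1 = #p.2} =>
    hA.exists_norm_le_mul_norm_restrict_mulVec p.2
  obtain ⟨K₀, hK₀⟩ := Finite.exists_le K
  refine ⟨max K₀ 0, max K₀ 0 * ‖A‖, le_max_right _ _, by positivity, fun S T hST w => ?_⟩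
  set w₁ : Fin n → ℝ := fun k => if k ∈ T then w k else 0
  have h₁ : ‖T.restrict w‖ ≤ ‖w₁‖ :=
    (pi_norm_le_iff_of_nonneg (norm_nonneg _)).2 fun k => by
      simpa [w₁, k.2] using norm_le_pi_norm w₁ k
  have h₂ : ‖w - w₁‖ ≤ ‖Tᶜ.restrict w‖ :=
    (pi_norm_le_iff_of_nonneg (norm_nonneg _)).2 fun k => by
      by_cases hk : k ∈ T
      · simp [w₁, hk]
      · simpa [w₁, hk] using norm_le_pi_norm (Tᶜ.restrict w) ⟨k, mem_compl.2 hk⟩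
  have h₃ : ‖S.restrict (A *ᵥ w₁)‖ ≤ ‖S.restrict (A *ᵥ w)‖ + ‖A‖ * ‖w - w₁‖ := by
    have : S.restrict (A *ᵥ w₁) = S.restrict (A *ᵥ w) - S.restrict (A *ᵥ (w - w₁)) := by
      ext; simp [mulVec_sub]
    rw [this]
    refine (norm_sub_le _ _).trans ?_
    gcongr
    exact (pi_norm_comp_le _ _).trans (linfty_opNorm_mulVec _ _)
  have h₄ : ‖w₁‖ ≤ max K₀ 0 * ‖S.restrict (A *ᵥ w₁)‖ :=
    (hK ⟨(S, T), hST⟩ w₁ fun k hk => by simp [w₁, hk]).trans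
      (mul_le_mul_of_nonneg_right ((hK₀ _).trans (le_max_left _ _)) (norm_nonneg _))
  calc ‖T.restrict w‖ ≤ max K₀ 0 * (‖S.restrict (A *ᵥ w)‖ + ‖A‖ * ‖w - w₁‖) :=
        h₁.trans (h₄.trans (mul_le_mul_of_nonneg_left h₃ (le_max_right _ _)))
    _ ≤ _ := by
      rw [mul_add, mul_assoc]
      gcongr

end MinorBounds

lemma mul_div_two_mul_add_one_lt {K a : ℝ} (hK : 0 ≤ K) (ha : 0 < a) :
    K * (a / (2 * (K + 1))) < a / 2 := by
  rw [mul_div_assoc', div_lt_div_iff₀ (by positivity) two_pos]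
  nlinarith

lemma exists_notMem_of_card_lt_card_of_card_lt_card_compl {ι : Type*} [Fintype ι] [DecidableEq ι]
    {B B' T : Finset ι} (h : #B < #T) (h' : #B' < #Tᶜ) : ∃ i, i ∉ B ∧ i ∉ B' := by
  obtain ⟨i, -, hi⟩ := exists_mem_notMem_of_card_lt_card (t := univ) (s := B ∪ B') <|
    calc #(B ∪ B') ≤ #B + #B' := card_union_le _ _
      _ < #T + #Tᶜ := by omega
      _ = #(univ : Finset ι) := card_add_card_compl T
  exact ⟨i, not_or.1 (mem_union.not.1 hi)⟩

section Separation

variable {n : ℕ}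

lemma card_filter_abs_mulVec_lt_lt_card {A : Matrix (Fin n) (Fin n) ℝ} {K C : ℝ} (hK : 0 ≤ K)
    (hA : ∀ S T : Finset (Fin n), #S = #T → ∀ w : Fin n → ℝ,
      ‖T.restrict w‖ ≤ K * ‖S.restrict (A *ᵥ w)‖ + C * ‖Tᶜ.restrict w‖)
    {T : Finset (Fin n)} {w : Fin n → ℝ} (hw : 0 < ‖w‖) (hTw : ‖w‖ ≤ ‖T.restrict w‖)
    (hTcw : C * ‖Tᶜ.restrict w‖ ≤ ‖w‖ / 2) :
    #{i | |(A *ᵥ w) i| < ‖w‖ / (2 * (K + 1))} < #T := by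
  by_contra! hcard
  obtain ⟨S, hS, hST⟩ := exists_subset_card_eq hcard
  have hsmall : ‖S.restrict (A *ᵥ w)‖ < ‖w‖ / (2 * (K + 1)) :=
    (pi_norm_lt_iff (by positivity)).2 fun i => by simpa using (mem_filter.1 (hS i.2)).2
  have := hA S T hST w
  have := mul_div_two_mul_add_one_lt hK hw
  nlinarith

lemma exists_finset_norm_restrict_split (w u : Fin n → ℝ) {L : ℝ} (hL : 1 < L) (hw : 0 < ‖w‖)
    (h : L * ‖w * u‖ ≤ ‖w‖ * ‖u‖) :
    ∃ T : Finset (Fin n), ‖w‖ ≤ ‖T.restrict w‖ ∧ ‖Tᶜ.restrict w‖ ≤ ‖w‖ / L ∧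
      ‖u‖ ≤ ‖Tᶜ.restrict u‖ ∧ ‖T.restrict u‖ ≤ L * ‖w * u‖ / ‖w‖ := by
  have hL₀ : 0 < L := one_pos.trans hL
  have hwu_le : ∀ k, |w k| * |u k| ≤ ‖w * u‖ := fun k => by
    simpa [abs_mul] using norm_le_pi_norm (w * u) k
  set T : Finset (Fin n) := {k | ‖w‖ / L < |w k|}
  have : Nonempty (Fin n) := by
    by_contra! h
    exact hw.ne' (by rw [Subsingleton.elim w 0, norm_zero])
  refine ⟨T, ?_, ?_, ?_, ?_⟩
  · obtain ⟨k, hk : ‖w k‖ = ‖w‖⟩ := (IsGreatest.pi_norm w).1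
    have hkT : k ∈ T := by
      simpa [T, ← Real.norm_eq_abs, hk] using div_lt_self hw hL
    exact hk ▸ norm_le_pi_norm (T.restrict w) ⟨k, hkT⟩
  · refine (pi_norm_le_iff_of_nonneg (by positivity)).2 fun k => ?_
    simpa [T] using mem_compl.1 k.2
  · obtain ⟨k, hk : ‖u k‖ = ‖u‖⟩ := (IsGreatest.pi_norm u).1
    rcases (norm_nonneg u).eq_or_lt with hu | hu
    · exact hu ▸ norm_nonneg _
    have hkT : k ∉ T := by
      simp only [T, mem_filter, mem_univ, true_and, not_lt, le_div_iff₀ hL₀]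
      have hwk : |w k| * L * ‖u‖ ≤ ‖w‖ * ‖u‖ := by
        have := mul_le_mul_of_nonneg_left (hwu_le k) hL₀.le
        rw [← Real.norm_eq_abs (u k), hk] at this
        linarith
      exact le_of_mul_le_mul_right hwk hu
    exact hk ▸ norm_le_pi_norm (Tᶜ.restrict u) ⟨k, mem_compl.2 hkT⟩
  · refine (pi_norm_le_iff_of_nonneg (by positivity)).2 fun k => ?_
    have hk : ‖w‖ < |w k| * L := (div_lt_iff₀ hL₀).1 (mem_filter.1 k.2).2
    rw [le_div_iff₀ hw]
    change |u k| * ‖w‖ ≤ L * ‖w * u‖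
    nlinarith [hwu_le k, mul_le_mul_of_nonneg_left hk.le (abs_nonneg (u k))]

theorem Matrix.AllMinorsNeZero.exists_lt_abs_mulVec_mul_mulVec {A B : Matrix (Fin n) (Fin n) ℝ}
    (hA : A.AllMinorsNeZero) (hB : B.AllMinorsNeZero) :
    ∃ κ : ℝ, ∀ w u : Fin n → ℝ, κ * ‖w * u‖ < ‖w‖ * ‖u‖ →
      ∃ i, n * ‖w * u‖ < |(A *ᵥ w) i * (B *ᵥ u) i| := by
  obtain ⟨K, C, hK, hC, hA'⟩ := hA.exists_norm_restrict_le
  obtain ⟨K', C', hK', hC', hB'⟩ := hB.exists_norm_restrict_le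
  -- `L` caps the `C`-error on `Tᶜ` at `‖w‖ / 2`; the summands of `κ` are what the splitting,
  -- the bound `C' * ‖T.restrict u‖ ≤ ‖u‖ / 2` and the final `n * P < r * r'` need.
  set L := 2 * (C + 1)
  refine ⟨L * (1 + 2 * C') + 4 * n * (K + 1) * (K' + 1), fun w u h => ?_⟩
  set P := ‖w * u‖
  have hLP : L * P + 2 * C' * L * P + 4 * n * (K + 1) * (K' + 1) * P < ‖w‖ * ‖u‖ := by
    linarith
  have hLP₀ : 0 ≤ L * P := by positivity
  have hLP₁ : 0 ≤ 2 * C' * L * P := by positivity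
  have hLP₂ : 0 ≤ 4 * n * (K + 1) * (K' + 1) * P := by positivity
  have hwu : 0 < ‖w‖ * ‖u‖ := by nlinarith
  have hw : 0 < ‖w‖ := (norm_nonneg w).lt_of_ne fun h0 => by simp [← h0] at hwu
  have hu : 0 < ‖u‖ := (norm_nonneg u).lt_of_ne fun h0 => by simp [← h0] at hwu
  obtain ⟨T, hTw, hTcw, hTcu, hTu⟩ :=
    exists_finset_norm_restrict_split w u (by linarith : 1 < L) hw (by linarith)
  set r := ‖w‖ / (2 * (K + 1))
  set r' := ‖u‖ / (2 * (K' + 1))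
  set Bw : Finset (Fin n) := {i | |(A *ᵥ w) i| < r}
  set Bu : Finset (Fin n) := {i | |(B *ᵥ u) i| < r'}
  have hcard_w : #Bw < #T := by
    refine card_filter_abs_mulVec_lt_lt_card hK hA' hw hTw ?_
    calc C * ‖Tᶜ.restrict w‖ ≤ C * (‖w‖ / L) := by gcongr
      _ ≤ ‖w‖ / 2 := (mul_div_two_mul_add_one_lt hC hw).le
  have hcard_u : #Bu < #Tᶜ := by
    refine card_filter_abs_mulVec_lt_lt_card hK' hB' hu hTcu ?_
    rw [compl_compl]
    calc C' * ‖T.restrict u‖ ≤ C' * (L * P / ‖w‖) := by gcongr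
      _ ≤ ‖u‖ / 2 := by
        rw [mul_div_assoc', div_le_div_iff₀ hw two_pos]
        linarith
  obtain ⟨i, hiw, hiu⟩ := exists_notMem_of_card_lt_card_of_card_lt_card_compl hcard_w hcard_u
  simp only [Bw, Bu, mem_filter, mem_univ, true_and, not_lt] at hiw hiu
  refine ⟨i, ?_⟩
  calc n * P < r * r' := by
        rw [div_mul_div_comm, lt_div_iff₀ (by positivity)]
        linarith
    _ ≤ |(A *ᵥ w) i| * |(B *ᵥ u) i| := mul_le_mul hiw hiu (by positivity) (abs_nonneg _)
    _ = |(A *ᵥ w) i * (B *ᵥ u) i| := (abs_mul _ _).symm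

end Separation

lemma mul_norm_le_norm_mul {ι : Type*} [Fintype ι] [Nonempty ι] (v y : ι → ℝ)
    (hy : ∀ i, y i ≠ 0) {c : ℝ} (hc : 0 ≤ c) (h : c * ⨆ i, ‖y‖ ^ 2 / y i ^ 2 ≤ ‖v‖) :
    c * ‖y‖ ≤ ‖v * y‖ := by
  obtain ⟨j, hj : ‖v j‖ = ‖v‖⟩ := (IsGreatest.pi_norm v).1
  have hyj : 0 < |y j| := abs_pos.2 (hy j)
  have hyj_le : |y j| ≤ ‖y‖ := norm_le_pi_norm y j
  have hsup : c * (‖y‖ ^ 2 / y j ^ 2) ≤ ‖v‖ :=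
    (mul_le_mul_of_nonneg_left (le_ciSup (Finite.bddAbove_range _) j) hc).trans h
  have hy_le : ‖y‖ ≤ ‖y‖ ^ 2 / y j ^ 2 * |y j| := by
    rw [← sq_abs (y j), div_mul_eq_mul_div, le_div_iff₀ (by positivity)]
    nlinarith [mul_le_mul_of_nonneg_left hyj_le (mul_nonneg (norm_nonneg y) hyj.le)]
  calc c * ‖y‖ ≤ c * (‖y‖ ^ 2 / y j ^ 2) * |y j| := by
        rw [mul_assoc]
        exact mul_le_mul_of_nonneg_left hy_le hc
    _ ≤ ‖v‖ * |y j| := by gcongr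
    _ = ‖(v * y) j‖ := by rw [← hj, Pi.mul_apply, norm_mul, Real.norm_eq_abs (y j)]
    _ ≤ ‖v * y‖ := norm_le_pi_norm _ j

lemma mulVec_vecMul_of_mul_transpose_eq_one {m R : Type*} [Fintype m] [DecidableEq m]
    [CommRing R] {A B : Matrix m m R} (h : B * Aᵀ = 1) (c : m → R) : B *ᵥ (c ᵥ* A) = c := by
  rw [← mulVec_transpose, mulVec_mulVec, h, one_mulVec]

lemma exists_nonneg_mul_of_chiHalf_ne_zero {n : ℕ} {f : Fin n → Fin n → ℝ} {x y : Fin n → ℝ}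
    (h : chiHalf n f x y ≠ 0) :
    ∃ c : Fin n → ℝ, (∀ i, 0 ≤ (of f *ᵥ y) i * c i) ∧ x = c ᵥ* of f := by
  rw [chiHalf, ite_ne_right_iff] at h
  obtain ⟨⟨c, hsign, rfl⟩, -⟩ := h
  refine ⟨c, fun i => ?_, ?_⟩
  · have := hsign i
    split_ifs at this with ht
    · exact mul_nonneg ht.le this
    · exact mul_nonneg_of_nonpos_of_nonpos (not_lt.1 ht) this.le
  · ext k
    simp [vecMul, dotProduct, Finset.sum_apply]

lemma exists_nonneg_mul_of_chiHalf_scale_ne_zero {n : ℕ} {f : Fin n → Fin n → ℝ}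
    {x y v : Fin n → ℝ} (hv : ∀ i, v i ≠ 0) (h : chiHalf n (fun i k => v k * f i k) x y ≠ 0) :
    ∃ c : Fin n → ℝ, (∀ i, 0 ≤ (of f *ᵥ (v * y)) i * c i) ∧ c ᵥ* of f = v⁻¹ * x := by
  have hscale : of (fun i k => v k * f i k) = of f * diagonal v := by
    ext i k
    simp [mul_comm]
  have hdy : diagonal v *ᵥ y = v * y := by
    ext k
    simp [mulVec_diagonal]
  obtain ⟨c, hsign, rfl⟩ := exists_nonneg_mul_of_chiHalf_ne_zero h
  refine ⟨c, fun i => ?_, ?_⟩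
  · simpa [hscale, ← mulVec_mulVec, hdy] using hsign i
  · ext k
    simp only [hscale, ← vecMul_vecMul, vecMul_diagonal, Pi.mul_apply, Pi.inv_apply]
    rw [mul_comm _ (v k), inv_mul_cancel_left₀ (hv k)]

lemma abs_mulVec_mul_le_card_mul_norm_mul {n : ℕ} {A : Matrix (Fin n) (Fin n) ℝ}
    {w c u : Fin n → ℝ} (hsign : ∀ i, 0 ≤ (A *ᵥ w) i * c i) (hc : c ᵥ* A = u) (i : Fin n) :
    |(A *ᵥ w) i * c i| ≤ n * ‖w * u‖ :=
  calc |(A *ᵥ w) i * c i| = (A *ᵥ w) i * c i := abs_of_nonneg (hsign i)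
    _ ≤ (A *ᵥ w) ⬝ᵥ c := single_le_sum (fun j _ => hsign j) (mem_univ i)
    _ = w ⬝ᵥ u := by rw [dotProduct_comm, dotProduct_mulVec, hc, dotProduct_comm]
    _ ≤ ∑ k, ‖(w * u) k‖ := sum_le_sum fun k _ => le_abs_self _
    _ ≤ n * ‖w * u‖ := by simpa using Pi.sum_norm_apply_le_norm (w * u)

/-- let `B` and its dual `B^∨` be bases of `ℝ^n` all of whose square minors are
nonzero. There exists `c(B) > 0` such that for all `x, y ∈ (ℝ*)^n` and all `v` with
`|N(v)| = 1`, if `χ_{vB}(x,y) ≠ 0` then `‖v‖ < c(B) sup_i ‖y‖²/|y_i|²` or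
`‖v⁻¹‖ < c(B) sup_i ‖x‖²/|x_i|²`. -/
theorem chiHalf_support_norm_bound
    (n : ℕ) (hn : 0 < n) (f fd : Fin n → Fin n → ℝ)
    (hdual : ∀ i j, ∑ k, fd i k * f j k = if i = j then (1 : ℝ) else 0)
    (hminor_f : ∀ (k : ℕ) (r c : Fin k → Fin n), Function.Injective r →
      Function.Injective c → ((Matrix.of f).submatrix r c).det ≠ 0)
    (hminor_fd : ∀ (k : ℕ) (r c : Fin k → Fin n), Function.Injective r →
      Function.Injective c → ((Matrix.of fd).submatrix r c).det ≠ 0) :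
    ∃ cB : ℝ, 0 < cB ∧
      ∀ (x y v : Fin n → ℝ), (∀ i, x i ≠ 0) → (∀ i, y i ≠ 0) → (∀ i, v i ≠ 0) →
        |∏ i, v i| = 1 →
        chiHalf n (fun i k => v k * f i k) x y ≠ 0 →
        ‖v‖ < cB * ⨆ i, ‖y‖ ^ 2 / (y i) ^ 2 ∨
        ‖(fun i => (v i)⁻¹ : Fin n → ℝ)‖ < cB * ⨆ i, ‖x‖ ^ 2 / (x i) ^ 2 := by
  have : Nonempty (Fin n) := ⟨⟨0, hn⟩⟩
  have hdual' : of fd * (of f)ᵀ = 1 := by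
    ext i j
    simpa [mul_apply, one_apply] using hdual i j
  obtain ⟨κ, hκ⟩ := AllMinorsNeZero.exists_lt_abs_mulVec_mul_mulVec hminor_f hminor_fd
  refine ⟨|κ| + 1, by positivity, fun x y v hx hy hv _ hχ => ?_⟩
  by_contra! hlarge
  obtain ⟨c, hsign, hc⟩ := exists_nonneg_mul_of_chiHalf_scale_ne_zero hv hχ
  set w := v * y
  set u := v⁻¹ * x
  have hwu : w * u = x * y := by
    ext k
    simp only [w, u, Pi.mul_apply, Pi.inv_apply]
    field_simp [hv k]
  have hxy : 0 < ‖x‖ * ‖y‖ := mul_pos (norm_pos_iff.2 fun h => hx ⟨0, hn⟩ (congrFun h _))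
    (norm_pos_iff.2 fun h => hy ⟨0, hn⟩ (congrFun h _))
  have hw : (|κ| + 1) * ‖y‖ ≤ ‖w‖ := mul_norm_le_norm_mul v y hy (by positivity) hlarge.1
  have hu : (|κ| + 1) * ‖x‖ ≤ ‖u‖ := mul_norm_le_norm_mul v⁻¹ x hx (by positivity) hlarge.2
  obtain ⟨i, hi⟩ := hκ w u <| by
    rw [hwu]
    calc κ * ‖x * y‖ ≤ |κ| * (‖x‖ * ‖y‖) :=
          mul_le_mul (le_abs_self κ) (norm_mul_le x y) (norm_nonneg _) (abs_nonneg κ)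
      _ < (|κ| + 1) * ‖y‖ * ((|κ| + 1) * ‖x‖) := by
        nlinarith [mul_nonneg (mul_nonneg (abs_nonneg κ) (abs_nonneg κ)) hxy.le]
      _ ≤ ‖w‖ * ‖u‖ := mul_le_mul hw hu (by positivity) (norm_nonneg _)
  rw [← hc, mulVec_vecMul_of_mul_transpose_eq_one hdual', hc] at hi
  linarith [abs_mulVec_mul_le_card_mul_norm_mul hsign hc i]
end

section
/- Let a ∈ [0,1] and ζ ≠ 1 a root of unity in ℂ. Define F_{a,ζ}(y) = e^{−ay}/(1 − ζ e^{−y}) for y ∈ ℝ. Then: (i) F_{a,ζ} and all its derivatives are bounded on ℝ; moreover the k-th derivative is rapidly decreasing at ±∞ for every k ≥ 1, and F_{a,ζ} itself is rapidly decreasing if a ∉ {0,1}. (ii) If a ∈ {0,1}, then y ↦ ζ^a F_{a,ζ}(y) − (−1)^a 𝟙_{(−1)^a ℝ_{≥0}}(y) is rapidly decreasing at ±∞ (where 𝟙_{+1} = 𝟙_{ℝ_{≥0}}, 𝟙_{−1} = 𝟙_{ℝ_{≤0}}). -/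
open scoped BigOperators

/-- polynomial growth is beaten by exponential decay -/
lemma rapid_decay_of_exp (f : ℝ → ℂ) (C c : ℝ) (hc : 0 < c)
    (h : ∀ y, ‖f y‖ ≤ C * Real.exp (-(c * |y|))) (N : ℕ) :
    ∃ C' : ℝ, ∀ y : ℝ, (1 + |y|) ^ N * ‖f y‖ ≤ C' := by
  refine ⟨max C 0 * (Nat.factorial N / c ^ N * Real.exp c), fun y => ?_⟩
  have h1 : ‖f y‖ ≤ max C 0 * Real.exp (-(c * |y|)) := by
    refine (h y).trans (mul_le_mul_of_nonneg_right (le_max_left _ _) (Real.exp_pos _).le)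
  have h2 : (1 + |y|) ^ N ≤ Nat.factorial N / c ^ N * Real.exp c * Real.exp (c * |y|) := by
    have hx : (0:ℝ) ≤ c * (1 + |y|) := by positivity
    have hpow : (c * (1 + |y|)) ^ N ≤ Nat.factorial N * Real.exp (c * (1 + |y|)) := by
      have h3 := Real.pow_div_factorial_le_exp _ hx N
      rw [div_le_iff₀ (by positivity : (0:ℝ) < (Nat.factorial N : ℝ))] at h3
      linarith [h3]
    have hcN : (0:ℝ) < c ^ N := by positivity
    rw [mul_pow] at hpow
    calc (1 + |y|) ^ N = (c ^ N * (1 + |y|) ^ N) / c ^ N := by field_simp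
      _ ≤ (Nat.factorial N * (Real.exp c * Real.exp (c * |y|))) / c ^ N := by
          apply div_le_div_of_nonneg_right ?_ hcN.le
          calc c ^ N * (1 + |y|) ^ N ≤ Nat.factorial N * Real.exp (c * (1 + |y|)) := hpow
            _ = Nat.factorial N * (Real.exp c * Real.exp (c * |y|)) := by
                rw [mul_add, mul_one, Real.exp_add]
      _ = Nat.factorial N / c ^ N * Real.exp c * Real.exp (c * |y|) := by ring
  calc (1 + |y|) ^ N * ‖f y‖
      ≤ (Nat.factorial N / c ^ N * Real.exp c * Real.exp (c * |y|)) * (max C 0 * Real.exp (-(c * |y|))) := by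
        apply mul_le_mul h2 h1 (norm_nonneg _) (by positivity)
    _ = max C 0 * (Nat.factorial N / c ^ N * Real.exp c) * (Real.exp (c * |y|) * Real.exp (-(c * |y|))) := by ring
    _ = max C 0 * (Nat.factorial N / c ^ N * Real.exp c) := by
        rw [← Real.exp_add, add_neg_cancel, Real.exp_zero, mul_one]

/-- bound for polynomial eval on a ball -/
lemma poly_bound (P : Polynomial ℂ) (R : ℝ) :
    ∃ C : ℝ, 0 ≤ C ∧ ∀ z : ℂ, ‖z‖ ≤ R → ‖P.eval z‖ ≤ C := by
  obtain ⟨C, hC⟩ := (isCompact_closedBall (0:ℂ) R).exists_bound_of_continuousOn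
    (P.continuous_aeval.continuousOn (s := Metric.closedBall 0 R))
  refine ⟨max C 0, le_max_right _ _, fun z hz => ?_⟩
  have := hC z (by simpa [Metric.mem_closedBall, dist_eq_norm] using hz)
  simpa [Polynomial.coe_aeval_eq_eval] using this.trans (le_max_left C 0)
lemma rapid_decay_two_sided (f : ℝ → ℂ) (c C1 C2 : ℝ) (hc : 0 < c)
    (h1 : ∀ y : ℝ, 0 ≤ y → ‖f y‖ ≤ C1 * Real.exp (-(c * y)))
    (h2 : ∀ y : ℝ, y ≤ 0 → ‖f y‖ ≤ C2 * Real.exp (c * y)) (N : ℕ) :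
    ∃ C' : ℝ, ∀ y : ℝ, (1 + |y|) ^ N * ‖f y‖ ≤ C' := by
  apply rapid_decay_of_exp f (max C1 C2) c hc _ N
  intro y
  rcases le_total 0 y with hy | hy
  · rw [abs_of_nonneg hy]
    exact (h1 y hy).trans (mul_le_mul_of_nonneg_right (le_max_left _ _) (Real.exp_pos _).le)
  · rw [abs_of_nonpos hy, show -(c * -y) = c * y by ring]
    exact (h2 y hy).trans (mul_le_mul_of_nonneg_right (le_max_right _ _) (Real.exp_pos _).le)


/-- the complex absolute value, as an `AbsoluteValue` (removed from Mathlib) -/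
noncomputable abbrev Complex.abs : AbsoluteValue ℂ ℝ := NormedField.toAbsoluteValue ℂ

lemma Complex.norm_eq_abs (z : ℂ) : ‖z‖ = Complex.abs z := rfl

lemma Complex.abs_exp (z : ℂ) : Complex.abs (Complex.exp z) = Real.exp z.re :=
  Complex.norm_exp z

section
variable (a : ℝ) (ζ : ℂ)

/-- recursion of polynomials giving the derivatives -/
noncomputable def Pder (a : ℝ) : ℕ → Polynomial ℂ
  | 0 => Polynomial.X
  | k+1 => (-(a:ℂ)) • Pder a k + (Polynomial.X - Polynomial.X^2) * (Pder a k).derivative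

lemma Pder_X_dvd (a : ℝ) (k : ℕ) : Polynomial.X ∣ Pder a k := by
  induction k with
  | zero => exact dvd_rfl
  | succ k ih =>
    obtain ⟨Q, hQ⟩ := ih
    refine ⟨(-(a:ℂ)) • Q + (1 - Polynomial.X) * (Pder a k).derivative, ?_⟩
    rw [Pder, hQ]
    simp only [Polynomial.smul_eq_C_mul, Polynomial.derivative_mul, Polynomial.derivative_X]
    ring

lemma Pder_root_one (a : ℝ) (ha : a = 0) (k : ℕ) (hk : 1 ≤ k) :
    (Pder a k).eval 1 = 0 := by
  obtain ⟨j, rfl⟩ : ∃ j, k = j + 1 := ⟨k - 1, by omega⟩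
  subst ha
  simp [Pder]

lemma Pder_Xsq_dvd (a : ℝ) (ha : a = 1) (k : ℕ) (hk : 1 ≤ k) :
    Polynomial.X ^ 2 ∣ Pder a k := by
  subst ha
  induction k with
  | zero => omega
  | succ k ih =>
    rcases Nat.eq_or_lt_of_le hk with h | h
    · -- k = 0 case : Pder 1 1 = -X^2
      have hk0 : k = 0 := by omega
      subst hk0
      refine ⟨-1, ?_⟩
      simp only [Pder, Polynomial.derivative_X, Polynomial.smul_eq_C_mul, Polynomial.C_neg, Complex.ofReal_one,
        map_one]
      ring
    · obtain ⟨Q, hQ⟩ := ih (by omega)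
      refine ⟨(-1 : ℂ) • Q + (2*(1 - Polynomial.X))*Q + (Polynomial.X - Polynomial.X^2) * Q.derivative, ?_⟩
      rw [Pder, hQ]
      simp only [Polynomial.smul_eq_C_mul, Polynomial.derivative_mul, Polynomial.derivative_pow,
        Polynomial.derivative_X, Nat.cast_ofNat, map_ofNat, Polynomial.C_neg, Complex.ofReal_one, map_one]
      ring

end

/-- let `a ∈ [0,1]` and `ζ ≠ 1` a root of unity, and
`F_{a,ζ}(y) = e^{-ay}/(1 - ζ e^{-y})`. Then `F_{a,ζ}` is `C^∞` on `ℝ`, all its derivatives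
are bounded, the `k`-th derivative is rapidly decreasing for `k ≥ 1` (and also for `k = 0`
when `a ∉ {0,1}`), and if `a ∈ {0,1}` then `ζ^a F_{a,ζ}(y) - (-1)^a 𝟙_{(-1)^a}(y)` is
rapidly decreasing (with `𝟙_{+1} = 𝟙_{ℝ_{≥0}}`, `𝟙_{-1} = 𝟙_{ℝ_{≤0}}`). -/
theorem F_a_zeta_decay
    (a : ℝ) (ha : a ∈ Set.Icc (0 : ℝ) 1)
    (ζ : ℂ) (hζroot : ∃ m : ℕ, 0 < m ∧ ζ ^ m = 1) (hζ1 : ζ ≠ 1)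
    (F : ℝ → ℂ) (hF : F = fun y : ℝ => Complex.exp (-(a : ℂ) * y) / (1 - ζ * Complex.exp (-(y : ℂ)))) :
    ContDiff ℝ (⊤ : ℕ∞) F ∧
    (∀ k : ℕ, ∃ C : ℝ, ∀ y : ℝ, ‖iteratedDeriv k F y‖ ≤ C) ∧
    (∀ k : ℕ, 1 ≤ k → ∀ N : ℕ, ∃ C : ℝ, ∀ y : ℝ,
      (1 + |y|) ^ N * ‖iteratedDeriv k F y‖ ≤ C) ∧
    (a ≠ 0 → a ≠ 1 → ∀ N : ℕ, ∃ C : ℝ, ∀ y : ℝ, (1 + |y|) ^ N * ‖F y‖ ≤ C) ∧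
    (a = 0 → ∀ N : ℕ, ∃ C : ℝ, ∀ y : ℝ,
      (1 + |y|) ^ N * ‖F y - Set.indicator (Set.Ici (0 : ℝ)) (fun _ => (1 : ℂ)) y‖ ≤ C) ∧
    (a = 1 → ∀ N : ℕ, ∃ C : ℝ, ∀ y : ℝ,
      (1 + |y|) ^ N * ‖ζ * F y + Set.indicator (Set.Iic (0 : ℝ)) (fun _ => (1 : ℂ)) y‖ ≤ C) := by
  obtain ⟨ha0, ha1⟩ := ha
  obtain ⟨m, hm, hζm⟩ := hζroot
  -- |ζ| = 1
  have hζabs : Complex.abs ζ = 1 := by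
    have h1 : Complex.abs ζ ^ m = 1 := by
      rw [← map_pow, hζm, map_one]
    by_contra hne
    rcases lt_or_gt_of_ne hne with hlt | hgt
    · have := pow_lt_one₀ (apply_nonneg Complex.abs ζ) hlt (by omega : m ≠ 0)
      rw [h1] at this; exact lt_irrefl _ this
    · have := one_lt_pow₀ hgt (by omega : m ≠ 0)
      rw [h1] at this; exact lt_irrefl _ this
  set den : ℝ → ℂ := fun y => 1 - ζ * Complex.exp (-(y:ℂ)) with hden_def
  have habs : ∀ y : ℝ, Complex.abs (ζ * Complex.exp (-(y:ℂ))) = Real.exp (-y) := by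
    intro y
    rw [map_mul, hζabs, one_mul, Complex.abs_exp]
    norm_num
  have hden_ne : ∀ y : ℝ, den y ≠ 0 := by
    intro y h
    have h1 : ζ * Complex.exp (-(y:ℂ)) = 1 := by
      have := sub_eq_zero.mp h
      exact this.symm
    have h2 : Real.exp (-y) = 1 := by rw [← habs y, h1, map_one]
    have hy : y = 0 := by
      have := Real.exp_injective (by rw [h2, Real.exp_zero] : Real.exp (-y) = Real.exp 0)
      linarith
    rw [hy] at h1
    simp at h1
    exact hζ1 h1
  -- uniform lower bound for the denominator
  have hnorm_den : ∀ y : ℝ, ‖den y‖ = Complex.abs (den y) := fun y => rfl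
  obtain ⟨δ, hδpos, hlow1, hlow2⟩ :
      ∃ δ : ℝ, 0 < δ ∧ (∀ y : ℝ, δ ≤ ‖den y‖) ∧ (∀ y : ℝ, y ≤ 0 → δ * Real.exp (-y) ≤ ‖den y‖) := by
    set R := Real.log 2 with hR
    have hRpos : 0 < R := Real.log_pos (by norm_num)
    have hcont : ContinuousOn (fun y => ‖den y‖) (Set.Icc (-R) R) := by
      apply Continuous.continuousOn
      fun_prop
    obtain ⟨y₀, hy₀, hmin'⟩ := (isCompact_Icc (a := -R) (b := R)).exists_isMinOn
      ⟨0, by constructor <;> linarith⟩ hcont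
    have hmin : ∀ y ∈ Set.Icc (-R) R, ‖den y₀‖ ≤ ‖den y‖ := fun y hy => hmin' hy
    set δ₀ := ‖den y₀‖ with hδ₀
    have hδ₀pos : 0 < δ₀ := norm_pos_iff.mpr (hden_ne y₀)
    refine ⟨min (1/2) (δ₀/2), by positivity, ?_, ?_⟩
    · intro y
      rcases le_total y R with hyR | hyR
      · rcases le_total (-R) y with hyL | hyL
        · exact le_trans (le_trans (min_le_right _ _) (by linarith)) (hmin y ⟨hyL, hyR⟩)
        · -- y ≤ -R : exp(-y) ≥ 2
          have h2 : (2:ℝ) ≤ Real.exp (-y) := by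
            rw [show (2:ℝ) = Real.exp R by rw [hR, Real.exp_log]; norm_num]
            exact Real.exp_le_exp.mpr (by linarith)
          have : Real.exp (-y) - 1 ≤ ‖den y‖ := by
            have := norm_sub_norm_le (ζ * Complex.exp (-(y:ℂ))) (1:ℂ)
            have habs' := habs y
            simp only [Complex.norm_eq_abs] at *
            calc Real.exp (-y) - 1 = Complex.abs (ζ * Complex.exp (-(y:ℂ))) - Complex.abs 1 := by
                  rw [habs', map_one]
              _ ≤ Complex.abs (ζ * Complex.exp (-(y:ℂ)) - 1) := this
              _ = Complex.abs (den y) := by rw [← Complex.abs.map_neg]; congr 1; simp [hden_def]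
          calc min (1/2) (δ₀/2) ≤ 1/2 := min_le_left _ _
            _ ≤ Real.exp (-y) - 1 := by linarith
            _ ≤ ‖den y‖ := this
      · -- y ≥ R : exp(-y) ≤ 1/2
        have h2 : Real.exp (-y) ≤ 1/2 := by
          rw [show (1/2:ℝ) = Real.exp (-R) by rw [hR, Real.exp_neg, Real.exp_log] <;> norm_num]
          exact Real.exp_le_exp.mpr (by linarith)
        have : 1 - Real.exp (-y) ≤ ‖den y‖ := by
          have := norm_sub_norm_le (1:ℂ) (ζ * Complex.exp (-(y:ℂ)))
          have habs' := habs y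
          simp only [Complex.norm_eq_abs] at *
          calc 1 - Real.exp (-y) = Complex.abs 1 - Complex.abs (ζ * Complex.exp (-(y:ℂ))) := by
                rw [habs', map_one]
            _ ≤ Complex.abs (1 - ζ * Complex.exp (-(y:ℂ))) := this
            _ = Complex.abs (den y) := rfl
        calc min (1/2) (δ₀/2) ≤ 1/2 := min_le_left _ _
          _ ≤ 1 - Real.exp (-y) := by linarith
          _ ≤ ‖den y‖ := this
    · intro y hy
      rcases le_total (-R) y with hyL | hyL
      · -- y ∈ [-R, 0] : exp(-y) ≤ 2
        have h2 : Real.exp (-y) ≤ 2 := by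
          rw [show (2:ℝ) = Real.exp R by rw [hR, Real.exp_log]; norm_num]
          exact Real.exp_le_exp.mpr (by linarith)
        calc min (1/2) (δ₀/2) * Real.exp (-y) ≤ (δ₀/2) * 2 := by
              apply mul_le_mul (min_le_right _ _) h2 (Real.exp_pos _).le (by positivity)
          _ = δ₀ := by ring
          _ ≤ ‖den y‖ := hmin y ⟨hyL, by linarith⟩
      · -- y ≤ -R : ‖den y‖ ≥ exp(-y) - 1 ≥ exp(-y)/2
        have h2 : (2:ℝ) ≤ Real.exp (-y) := by
          rw [show (2:ℝ) = Real.exp R by rw [hR, Real.exp_log]; norm_num]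
          exact Real.exp_le_exp.mpr (by linarith)
        have hden_ge : Real.exp (-y) - 1 ≤ ‖den y‖ := by
          have := norm_sub_norm_le (ζ * Complex.exp (-(y:ℂ))) (1:ℂ)
          have habs' := habs y
          simp only [Complex.norm_eq_abs] at *
          calc Real.exp (-y) - 1 = Complex.abs (ζ * Complex.exp (-(y:ℂ))) - Complex.abs 1 := by
                rw [habs', map_one]
            _ ≤ Complex.abs (ζ * Complex.exp (-(y:ℂ)) - 1) := this
            _ = Complex.abs (den y) := by rw [← Complex.abs.map_neg]; congr 1; simp [hden_def]
        calc min (1/2) (δ₀/2) * Real.exp (-y) ≤ (1/2) * Real.exp (-y) := by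
              apply mul_le_mul_of_nonneg_right (min_le_left _ _) (Real.exp_pos _).le
          _ ≤ Real.exp (-y) - 1 := by linarith
          _ ≤ ‖den y‖ := hden_ge
  set G : ℝ → ℂ := fun y => (den y)⁻¹ with hG_def
  have hGnorm : ∀ y : ℝ, ‖G y‖ = ‖den y‖⁻¹ := fun y => norm_inv _
  have hG1 : ∀ y : ℝ, ‖G y‖ ≤ δ⁻¹ := by
    intro y
    rw [hGnorm]
    exact inv_anti₀ hδpos (hlow1 y)
  have hG2 : ∀ y : ℝ, y ≤ 0 → ‖G y‖ ≤ δ⁻¹ * Real.exp y := by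
    intro y hy
    rw [hGnorm]
    have h1 : 0 < δ * Real.exp (-y) := by positivity
    calc ‖den y‖⁻¹ ≤ (δ * Real.exp (-y))⁻¹ := inv_anti₀ h1 (hlow2 y hy)
      _ = δ⁻¹ * Real.exp y := by rw [mul_inv, Real.exp_neg, inv_inv]
  have hGden : ∀ y : ℝ, den y * G y = 1 := fun y => mul_inv_cancel₀ (hden_ne y)
  have hG3 : ∀ y : ℝ, ‖G y - 1‖ ≤ δ⁻¹ * Real.exp (-y) := by
    intro y
    have h1 : G y - 1 = ζ * Complex.exp (-(y:ℂ)) * G y := by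
      have := hGden y
      have h2 : den y = 1 - ζ * Complex.exp (-(y:ℂ)) := rfl
      calc G y - 1 = G y - den y * G y := by rw [this]
        _ = ζ * Complex.exp (-(y:ℂ)) * G y := by rw [h2]; ring
    rw [h1, norm_mul]
    calc ‖ζ * Complex.exp (-(y:ℂ))‖ * ‖G y‖ ≤ Real.exp (-y) * δ⁻¹ := by
          apply mul_le_mul _ (hG1 y) (norm_nonneg _) (Real.exp_pos _).le
          rw [show ‖ζ * Complex.exp (-(y:ℂ))‖ = Complex.abs (ζ * Complex.exp (-(y:ℂ))) from rfl, habs]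
      _ = δ⁻¹ * Real.exp (-y) := mul_comm _ _
  have hFG : ∀ y : ℝ, F y = Complex.exp (-(a:ℂ) * y) * G y := by
    intro y; rw [hF]; exact div_eq_mul_inv _ _
  have hexpnorm : ∀ y : ℝ, ‖Complex.exp (-(a:ℂ) * y)‖ = Real.exp (-(a*y)) := by
    intro y
    rw [show ‖Complex.exp (-(a:ℂ)*y)‖ = Complex.abs (Complex.exp (-(a:ℂ)*y)) from rfl,
      Complex.abs_exp]
    norm_num
  -- smoothness
  have hGsmooth : ContDiff ℝ (⊤ : ℕ∞) G := by
    apply ContDiff.inv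
    · apply ContDiff.sub contDiff_const
      apply ContDiff.mul contDiff_const
      exact Complex.contDiff_exp.comp (Complex.ofRealCLM.contDiff.neg)
    · exact hden_ne
  have hFsmooth : ContDiff ℝ (⊤ : ℕ∞) F := by
    rw [funext hFG]
    apply ContDiff.mul _ hGsmooth
    have h1 : ContDiff ℝ (⊤ : ℕ∞) (fun y : ℝ => -(a:ℂ) * (y:ℂ)) :=
      contDiff_const.mul Complex.ofRealCLM.contDiff
    exact Complex.contDiff_exp.comp h1
  -- derivative facts
  have hexpD : ∀ y : ℝ, HasDerivAt (fun y : ℝ => Complex.exp (-(a:ℂ) * y))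
      (-(a:ℂ) * Complex.exp (-(a:ℂ) * y)) y := by
    intro y
    have h1 : HasDerivAt (fun z : ℂ => Complex.exp (-(a:ℂ) * z))
        (-(a:ℂ) * Complex.exp (-(a:ℂ) * (y:ℂ))) (y:ℂ) := by
      have h0 : HasDerivAt (fun z : ℂ => -(a:ℂ) * z) (-(a:ℂ)) (y:ℂ) := by
        simpa using (hasDerivAt_id (y:ℂ)).const_mul (-(a:ℂ))
      have h2 := (Complex.hasDerivAt_exp (-(a:ℂ) * (y:ℂ))).comp (y:ℂ) h0
      exact h2.congr_deriv (by ring)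
    exact h1.comp_ofReal
  have hdenD : ∀ y : ℝ, HasDerivAt den (ζ * Complex.exp (-(y:ℂ))) y := by
    intro y
    have h1 : HasDerivAt (fun z : ℂ => 1 - ζ * Complex.exp (-z))
        (ζ * Complex.exp (-(y:ℂ))) (y:ℂ) := by
      have h2 := (Complex.hasDerivAt_exp (-(y:ℂ))).comp (y:ℂ) ((hasDerivAt_id (y:ℂ)).neg)
      have h3 : HasDerivAt (fun z : ℂ => Complex.exp (-z)) (-Complex.exp (-(y:ℂ))) (y:ℂ) := by
        exact h2.congr_deriv (by ring)
      have h4 := (h3.const_mul ζ).const_sub 1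
      simpa [mul_comm] using h4
    exact h1.comp_ofReal
  have hGD : ∀ y : ℝ, HasDerivAt G (G y - (G y)^2) y := by
    intro y
    have hinv : HasDerivAt (fun z : ℂ => z⁻¹) (-((den y) ^ 2)⁻¹) (den y) :=
      hasDerivAt_inv (hden_ne y)
    have h1 := HasDerivAt.scomp (𝕜 := ℝ) (𝕜' := ℂ) y hinv (hdenD y)
    have h2 : (ζ * Complex.exp (-(y:ℂ))) • (-((den y) ^ 2)⁻¹) = G y - (G y)^2 := by
      have h3 : ζ * Complex.exp (-(y:ℂ)) = 1 - den y := by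
        simp [hden_def]
      rw [smul_eq_mul, h3]
      show (1 - den y) * -((den y)^2)⁻¹ = (den y)⁻¹ - ((den y)⁻¹)^2
      have hd := hden_ne y
      field_simp
      ring
    rw [h2] at h1
    exact h1
  -- the iterated derivative formula
  have hiter : ∀ k : ℕ, ∀ y : ℝ,
      iteratedDeriv k F y = Complex.exp (-(a:ℂ) * y) * (Pder a k).eval (G y) := by
    intro k
    induction k with
    | zero =>
      intro y
      rw [iteratedDeriv_zero, hFG, Pder]
      simp
    | succ k ih =>
      intro y
      rw [iteratedDeriv_succ]
      have heq : iteratedDeriv k F = fun y : ℝ => Complex.exp (-(a:ℂ) * y) * (Pder a k).eval (G y) :=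
        funext ih
      rw [heq]
      have hPD0 := HasDerivAt.scomp (𝕜 := ℝ) (𝕜' := ℂ) y ((Pder a k).hasDerivAt (G y)) (hGD y)
      have hprod := (hexpD y).mul hPD0
      have hder : deriv (fun y : ℝ => Complex.exp (-(a:ℂ) * y) * (Pder a k).eval (G y)) y
          = -(a:ℂ) * Complex.exp (-(a:ℂ) * y) * (Pder a k).eval (G y)
            + Complex.exp (-(a:ℂ) * y) * ((G y - (G y)^2) • (Pder a k).derivative.eval (G y)) :=
        hprod.deriv
      rw [hder]
      rw [show Pder a (k+1) = (-(a:ℂ)) • Pder a k + (Polynomial.X - Polynomial.X^2) * (Pder a k).derivative from rfl]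
      simp only [Polynomial.eval_add, Polynomial.eval_smul, Polynomial.eval_mul,
        Polynomial.eval_sub, Polynomial.eval_pow, Polynomial.eval_X, smul_eq_mul]
      ring
  have hea : ∀ y : ℝ, y ≤ 0 → Real.exp (-(a * y)) ≤ Real.exp (-y) := by
    intro y hy
    exact Real.exp_le_exp.mpr (by nlinarith)
  have hea' : ∀ y : ℝ, 0 ≤ y → Real.exp (-(a * y)) ≤ 1 := by
    intro y hy
    rw [← Real.exp_zero]
    exact Real.exp_le_exp.mpr (by nlinarith)
  have hGball : ∀ y : ℝ, ‖G y‖ ≤ δ⁻¹ := hG1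
  refine ⟨hFsmooth, ?_, ?_, ?_, ?_, ?_⟩
  · -- all derivatives bounded
    intro k
    obtain ⟨Cp, hCp0, hCp⟩ := poly_bound (Pder a k) δ⁻¹
    obtain ⟨Q, hQ⟩ := Pder_X_dvd a k
    obtain ⟨CQ, hCQ0, hCQ⟩ := poly_bound Q δ⁻¹
    refine ⟨max Cp (δ⁻¹ * CQ), fun y => ?_⟩
    rw [hiter k y, norm_mul, hexpnorm]
    rcases le_total 0 y with hy | hy
    · calc Real.exp (-(a * y)) * ‖(Pder a k).eval (G y)‖ ≤ 1 * Cp :=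
          mul_le_mul (hea' y hy) (hCp _ (hG1 y)) (norm_nonneg _) zero_le_one
        _ = Cp := one_mul _
        _ ≤ max Cp (δ⁻¹ * CQ) := le_max_left _ _
    · have heval : ‖(Pder a k).eval (G y)‖ ≤ δ⁻¹ * Real.exp y * CQ := by
        rw [hQ, Polynomial.eval_mul, Polynomial.eval_X, norm_mul]
        exact mul_le_mul (hG2 y hy) (hCQ _ (hG1 y)) (norm_nonneg _) (by positivity)
      calc Real.exp (-(a * y)) * ‖(Pder a k).eval (G y)‖
          ≤ Real.exp (-y) * (δ⁻¹ * Real.exp y * CQ) :=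
            mul_le_mul (hea y hy) heval (norm_nonneg _) (Real.exp_pos _).le
        _ = δ⁻¹ * CQ * (Real.exp (-y) * Real.exp y) := by ring
        _ = δ⁻¹ * CQ := by rw [← Real.exp_add]; simp
        _ ≤ max Cp (δ⁻¹ * CQ) := le_max_right _ _
  · -- k-th derivative rapidly decreasing for k ≥ 1
    intro k hk N
    obtain ⟨Cp, hCp0, hCp⟩ := poly_bound (Pder a k) δ⁻¹
    obtain ⟨Q, hQ⟩ := Pder_X_dvd a k
    obtain ⟨CQ, hCQ0, hCQ⟩ := poly_bound Q δ⁻¹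
    by_cases ha0' : a = 0
    · subst ha0'
      obtain ⟨Q1, hQ1⟩ := Polynomial.dvd_iff_isRoot.mpr (Pder_root_one 0 rfl k hk)
      obtain ⟨CQ1, hCQ10, hCQ1⟩ := poly_bound Q1 δ⁻¹
      apply rapid_decay_two_sided _ 1 (δ⁻¹ * CQ1) (δ⁻¹ * CQ) one_pos ?_ ?_ N
      · intro y hy
        rw [hiter k y, norm_mul, hexpnorm]
        simp only [zero_mul, neg_zero, Real.exp_zero, one_mul]
        rw [hQ1, Polynomial.eval_mul, norm_mul]
        have h1 : ‖Polynomial.eval (G y) (Polynomial.X - Polynomial.C (1:ℂ))‖ ≤ δ⁻¹ * Real.exp (-y) := by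
          simpa using hG3 y
        calc ‖Polynomial.eval (G y) (Polynomial.X - Polynomial.C (1:ℂ))‖ * ‖Q1.eval (G y)‖
            ≤ δ⁻¹ * Real.exp (-y) * CQ1 :=
              mul_le_mul h1 (hCQ1 _ (hG1 y)) (norm_nonneg _) (by positivity)
          _ = δ⁻¹ * CQ1 * Real.exp (-y) := by ring
      · intro y hy
        rw [hiter k y, norm_mul, hexpnorm]
        simp only [zero_mul, neg_zero, Real.exp_zero, one_mul]
        rw [hQ, Polynomial.eval_mul, Polynomial.eval_X, norm_mul]
        calc ‖G y‖ * ‖Q.eval (G y)‖ ≤ δ⁻¹ * Real.exp y * CQ :=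
              mul_le_mul (hG2 y hy) (hCQ _ (hG1 y)) (norm_nonneg _) (by positivity)
          _ = δ⁻¹ * CQ * Real.exp y := by ring
    · by_cases ha1' : a = 1
      · subst ha1'
        obtain ⟨Q2, hQ2⟩ := Pder_Xsq_dvd 1 rfl k hk
        obtain ⟨CQ2, hCQ20, hCQ2⟩ := poly_bound Q2 δ⁻¹
        apply rapid_decay_two_sided _ 1 Cp (δ⁻¹ * δ⁻¹ * CQ2) one_pos ?_ ?_ N
        · intro y hy
          rw [hiter k y, norm_mul, hexpnorm]
          calc Real.exp (-(1 * y)) * ‖(Pder 1 k).eval (G y)‖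
              ≤ Real.exp (-(1 * y)) * Cp :=
                mul_le_mul_of_nonneg_left (hCp _ (hG1 y)) (Real.exp_pos _).le
            _ = Cp * Real.exp (-(1 * y)) := mul_comm _ _
        · intro y hy
          rw [hiter k y, norm_mul, hexpnorm]
          have heval : ‖(Pder 1 k).eval (G y)‖ ≤ (δ⁻¹ * Real.exp y) ^ 2 * CQ2 := by
            rw [hQ2, Polynomial.eval_mul, Polynomial.eval_pow, Polynomial.eval_X, norm_mul,
              norm_pow]
            apply mul_le_mul _ (hCQ2 _ (hG1 y)) (norm_nonneg _) (by positivity)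
            exact pow_le_pow_left₀ (norm_nonneg _) (hG2 y hy) 2
          calc Real.exp (-(1 * y)) * ‖(Pder 1 k).eval (G y)‖
              ≤ Real.exp (-(1 * y)) * ((δ⁻¹ * Real.exp y) ^ 2 * CQ2) :=
                mul_le_mul_of_nonneg_left heval (Real.exp_pos _).le
            _ = δ⁻¹ * δ⁻¹ * CQ2 * (Real.exp (-(1 * y)) * Real.exp y * Real.exp y) := by ring
            _ = δ⁻¹ * δ⁻¹ * CQ2 * Real.exp (1 * y) := by
                rw [← Real.exp_add, ← Real.exp_add]; ring_nf
      · -- 0 < a < 1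
        have hapos : 0 < a := lt_of_le_of_ne ha0 (Ne.symm ha0')
        have halt : a < 1 := lt_of_le_of_ne ha1 ha1'
        have hc : 0 < min a (1 - a) := lt_min hapos (by linarith)
        apply rapid_decay_two_sided _ (min a (1 - a)) Cp (δ⁻¹ * CQ) hc ?_ ?_ N
        · intro y hy
          rw [hiter k y, norm_mul, hexpnorm]
          have h1 : Real.exp (-(a * y)) ≤ Real.exp (-(min a (1 - a) * y)) :=
            Real.exp_le_exp.mpr (by nlinarith [min_le_left a (1 - a)])
          calc Real.exp (-(a * y)) * ‖(Pder a k).eval (G y)‖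
              ≤ Real.exp (-(min a (1 - a) * y)) * Cp :=
                mul_le_mul h1 (hCp _ (hG1 y)) (norm_nonneg _) (Real.exp_pos _).le
            _ = Cp * Real.exp (-(min a (1 - a) * y)) := mul_comm _ _
        · intro y hy
          rw [hiter k y, norm_mul, hexpnorm]
          have heval : ‖(Pder a k).eval (G y)‖ ≤ δ⁻¹ * Real.exp y * CQ := by
            rw [hQ, Polynomial.eval_mul, Polynomial.eval_X, norm_mul]
            exact mul_le_mul (hG2 y hy) (hCQ _ (hG1 y)) (norm_nonneg _) (by positivity)
          have h2 : Real.exp ((1 - a) * y) ≤ Real.exp (min a (1 - a) * y) :=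
            Real.exp_le_exp.mpr (by nlinarith [min_le_right a (1 - a)])
          calc Real.exp (-(a * y)) * ‖(Pder a k).eval (G y)‖
              ≤ Real.exp (-(a * y)) * (δ⁻¹ * Real.exp y * CQ) :=
                mul_le_mul_of_nonneg_left heval (Real.exp_pos _).le
            _ = δ⁻¹ * CQ * (Real.exp (-(a * y)) * Real.exp y) := by ring
            _ = δ⁻¹ * CQ * Real.exp ((1 - a) * y) := by rw [← Real.exp_add]; ring_nf
            _ ≤ δ⁻¹ * CQ * Real.exp (min a (1 - a) * y) := by
                apply mul_le_mul_of_nonneg_left h2 (by positivity)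
  · -- F rapidly decreasing when a ∉ {0,1}
    intro ha0' ha1' N
    have hapos : 0 < a := lt_of_le_of_ne ha0 (Ne.symm ha0')
    have halt : a < 1 := lt_of_le_of_ne ha1 ha1'
    have hc : 0 < min a (1 - a) := lt_min hapos (by linarith)
    apply rapid_decay_two_sided _ (min a (1 - a)) δ⁻¹ δ⁻¹ hc ?_ ?_ N
    · intro y hy
      rw [hFG, norm_mul, hexpnorm]
      have h1 : Real.exp (-(a * y)) ≤ Real.exp (-(min a (1 - a) * y)) :=
        Real.exp_le_exp.mpr (by nlinarith [min_le_left a (1 - a)])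
      calc Real.exp (-(a * y)) * ‖G y‖ ≤ Real.exp (-(min a (1 - a) * y)) * δ⁻¹ :=
            mul_le_mul h1 (hG1 y) (norm_nonneg _) (Real.exp_pos _).le
        _ = δ⁻¹ * Real.exp (-(min a (1 - a) * y)) := mul_comm _ _
    · intro y hy
      rw [hFG, norm_mul, hexpnorm]
      have h2 : Real.exp ((1 - a) * y) ≤ Real.exp (min a (1 - a) * y) :=
        Real.exp_le_exp.mpr (by nlinarith [min_le_right a (1 - a)])
      calc Real.exp (-(a * y)) * ‖G y‖ ≤ Real.exp (-(a * y)) * (δ⁻¹ * Real.exp y) :=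
            mul_le_mul_of_nonneg_left (hG2 y hy) (Real.exp_pos _).le
        _ = δ⁻¹ * (Real.exp (-(a * y)) * Real.exp y) := by ring
        _ = δ⁻¹ * Real.exp ((1 - a) * y) := by rw [← Real.exp_add]; ring_nf
        _ ≤ δ⁻¹ * Real.exp (min a (1 - a) * y) := by
            apply mul_le_mul_of_nonneg_left h2 (by positivity)
  · -- a = 0 case
    intro ha0' N
    subst ha0'
    have hFy : ∀ y : ℝ, F y = G y := by
      intro y
      rw [hFG]
      simp
    apply rapid_decay_two_sided _ 1 δ⁻¹ δ⁻¹ one_pos ?_ ?_ N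
    · intro y hy
      rw [hFy, Set.indicator_of_mem (by exact hy : y ∈ Set.Ici (0:ℝ))]
      calc ‖G y - 1‖ ≤ δ⁻¹ * Real.exp (-y) := hG3 y
        _ = δ⁻¹ * Real.exp (-(1 * y)) := by rw [one_mul]
    · intro y hy
      rcases lt_or_eq_of_le hy with hlt | heq
      · rw [hFy, Set.indicator_of_notMem (by simpa using hlt : y ∉ Set.Ici (0:ℝ))]
        calc ‖G y - 0‖ = ‖G y‖ := by rw [sub_zero]
          _ ≤ δ⁻¹ * Real.exp y := hG2 y hy
          _ = δ⁻¹ * Real.exp (1 * y) := by rw [one_mul]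
      · subst heq
        rw [hFy, Set.indicator_of_mem (by exact le_refl (0:ℝ) : (0:ℝ) ∈ Set.Ici (0:ℝ))]
        calc ‖G (0:ℝ) - 1‖ ≤ δ⁻¹ * Real.exp (-(0:ℝ)) := hG3 0
          _ = δ⁻¹ * Real.exp (1 * (0:ℝ)) := by norm_num
  · -- a = 1 case
    intro ha1' N
    subst ha1'
    have hζF : ∀ y : ℝ, ζ * F y = G y - 1 := by
      intro y
      rw [hFG]
      have h1 : Complex.exp (-((1:ℝ):ℂ) * (y:ℂ)) = Complex.exp (-(y:ℂ)) := by norm_num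
      rw [h1]
      have h2 : ζ * (Complex.exp (-(y:ℂ)) * G y) = (1 - den y) * G y := by
        have : (1:ℂ) - den y = ζ * Complex.exp (-(y:ℂ)) := by simp [hden_def]
        rw [this]; ring
      calc ζ * (Complex.exp (-(y:ℂ)) * G y) = (1 - den y) * G y := h2
        _ = G y - den y * G y := by ring
        _ = G y - 1 := by rw [hGden y]
    apply rapid_decay_two_sided _ 1 δ⁻¹ δ⁻¹ one_pos ?_ ?_ N
    · intro y hy
      rcases lt_or_eq_of_le hy with hlt | heq
      · rw [hζF, Set.indicator_of_notMem (by simpa using hlt : y ∉ Set.Iic (0:ℝ))]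
        calc ‖G y - 1 + 0‖ = ‖G y - 1‖ := by rw [add_zero]
          _ ≤ δ⁻¹ * Real.exp (-y) := hG3 y
          _ = δ⁻¹ * Real.exp (-(1 * y)) := by rw [one_mul]
      · subst heq
        rw [hζF, Set.indicator_of_mem (by exact le_refl (0:ℝ) : (0:ℝ) ∈ Set.Iic (0:ℝ))]
        calc ‖G (0:ℝ) - 1 + 1‖ = ‖G (0:ℝ)‖ := by rw [sub_add_cancel]
          _ ≤ δ⁻¹ := hG1 0
          _ = δ⁻¹ * Real.exp (-(1 * (0:ℝ))) := by norm_num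
    · intro y hy
      rw [hζF, Set.indicator_of_mem (by exact hy : y ∈ Set.Iic (0:ℝ))]
      calc ‖G y - 1 + 1‖ = ‖G y‖ := by rw [sub_add_cancel]
        _ ≤ δ⁻¹ * Real.exp y := hG2 y hy
        _ = δ⁻¹ * Real.exp (1 * y) := by rw [one_mul]
end

section
/- Let r, s ∈ ℝ with s > 0, r > 0 and r + s < 1. Then there is a constant C(r,s) such that for all a ∈ ℝ: ∫_{−∞}^{+∞} |t|^{s−1} (1 + |t + a|)^{r−1} dt ≤ C(r,s) (1 + |a|)^{r+s−1}. -/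
/-!
With `A = 1 + |a|`, split the line into `|t| < A/2`, `A/2 ≤ |t| < 2A` and `2A ≤ |t|`.
Near the origin `1 + |t + a| ≥ A/2`, so the integrand is at most `(A/2)^(r-1) |t|^(s-1)`;
in the middle `|t|^(s-1) ≤ (A/2)^(s-1)` and `(1 + |t + a|)^(r-1) ≤ |t + a|^(r-1)` with
`|t + a| < 3A`; far out `1 + |t + a| ≥ |t|/2`, so the integrand is at most
`2^(1-r) |t|^(r+s-2)`, integrable at infinity because `r + s < 1`. Each of the three
majorants integrates to a constant times `A^(r+s-1)`.
-/

open MeasureTheory Set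
open scoped ENNReal

theorem lintegral_comp_abs {g : ℝ → ℝ≥0∞} (hg : Measurable g) :
    ∫⁻ x, g |x| = 2 * ∫⁻ x in Ioi 0, g x := by
  have hpos : ∫⁻ x in Ioi 0, g |x| = ∫⁻ x in Ioi 0, g x :=
    setLIntegral_congr_fun measurableSet_Ioi fun x hx => by rw [abs_of_pos hx]
  have hneg : ∫⁻ x in Iic 0, g |x| = ∫⁻ x in Ioi 0, g x := by
    have := (Measure.measurePreserving_neg (volume : Measure ℝ)).setLIntegral_comp_preimage
      (measurableSet_Ici (a := 0)) (hg.comp measurable_abs)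
    simp only [Function.comp_def, abs_neg, neg_preimage, neg_Ici, neg_zero] at this
    rw [this, ← hpos, setLIntegral_congr Ioi_ae_eq_Ici]
  rw [← lintegral_add_compl _ measurableSet_Ioi, compl_Ioi, hpos, hneg, two_mul]

theorem setLIntegral_Ioo_rpow {p c : ℝ} (hp : -1 < p) (hc : 0 ≤ c) :
    ∫⁻ x in Ioo 0 c, ENNReal.ofReal (x ^ p) = ENNReal.ofReal (c ^ (p + 1) / (p + 1)) := by
  rw [setLIntegral_congr Ioo_ae_eq_Ioc, ← ofReal_integral_eq_lintegral_ofReal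
    (intervalIntegral.intervalIntegrable_rpow' hp).1, ← intervalIntegral.integral_of_le hc,
    integral_rpow (Or.inl hp), Real.zero_rpow (by linarith), sub_zero]
  filter_upwards [ae_restrict_mem measurableSet_Ioc] with x hx
  exact Real.rpow_nonneg hx.1.le p

theorem setLIntegral_Ioi_rpow {p c : ℝ} (hp : p < -1) (hc : 0 < c) :
    ∫⁻ x in Ioi c, ENNReal.ofReal (x ^ p) = ENNReal.ofReal (-c ^ (p + 1) / (p + 1)) := by
  rw [← ofReal_integral_eq_lintegral_ofReal (integrableOn_Ioi_rpow_of_lt hp hc),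
    integral_Ioi_rpow_of_lt hp hc]
  filter_upwards [ae_restrict_mem measurableSet_Ioi] with x hx
  exact Real.rpow_nonneg (hc.trans hx).le p

theorem lintegral_indicator_Iio_rpow_abs {q c : ℝ} (hq : 0 < q) (hc : 0 ≤ c) :
    ∫⁻ t, (Iio c).indicator (fun x => ENNReal.ofReal (x ^ (q - 1))) |t|
      = ENNReal.ofReal (2 * c ^ q / q) := by
  rw [lintegral_comp_abs ((by fun_prop : Measurable _).indicator measurableSet_Iio),
    lintegral_indicator measurableSet_Iio, Measure.restrict_restrict measurableSet_Iio,
    Iio_inter_Ioi, setLIntegral_Ioo_rpow (by linarith) hc, sub_add_cancel,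
    ← ENNReal.ofReal_ofNat 2, ← ENNReal.ofReal_mul zero_le_two, mul_div_assoc]

theorem lintegral_indicator_Ici_rpow_abs {q c : ℝ} (hq : q < 0) (hc : 0 < c) :
    ∫⁻ t, (Ici c).indicator (fun x => ENNReal.ofReal (x ^ (q - 1))) |t|
      = ENNReal.ofReal (2 * c ^ q / -q) := by
  rw [lintegral_comp_abs ((by fun_prop : Measurable _).indicator measurableSet_Ici),
    lintegral_indicator measurableSet_Ici, Measure.restrict_restrict measurableSet_Ici,
    inter_eq_left.2 (Ici_subset_Ioi.2 hc), ← setLIntegral_congr Ioi_ae_eq_Ici,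
    setLIntegral_Ioi_rpow (by linarith) hc, sub_add_cancel,
    ← ENNReal.ofReal_ofNat 2, ← ENNReal.ofReal_mul zero_le_two, neg_div, div_neg, mul_neg,
    mul_div_assoc]

noncomputable def kernelMajorant (r s a t : ℝ) : ℝ≥0∞ :=
  ENNReal.ofReal (((1 + |a|) / 2) ^ (r - 1)) *
      (Iio ((1 + |a|) / 2)).indicator (fun x => ENNReal.ofReal (x ^ (s - 1))) |t|
    + ENNReal.ofReal (((1 + |a|) / 2) ^ (s - 1)) *
      (Iio (3 * (1 + |a|))).indicator (fun x => ENNReal.ofReal (x ^ (r - 1))) |t + a|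
    + ENNReal.ofReal (2 ^ (1 - r)) *
      (Ici (2 * (1 + |a|))).indicator (fun x => ENNReal.ofReal (x ^ (r + s - 1 - 1))) |t|

-- `Real.rpow` gives `0 ^ (r - 1) = 0`, so the middle-region bound
-- `(1 + |t + a|) ^ (r - 1) ≤ |t + a| ^ (r - 1)` fails at `t = -a`.
theorem kernel_le_kernelMajorant {r s a t : ℝ} (hr : r ≤ 1) (hs : s ≤ 1) (ht : t + a ≠ 0) :
    ENNReal.ofReal (|t| ^ (s - 1) * (1 + |t + a|) ^ (r - 1)) ≤ kernelMajorant r s a t := by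
  unfold kernelMajorant
  set A := 1 + |a|
  have hA0 : 0 < A / 2 := by positivity
  have hta : |t + a| ≤ |t| + |a| := abs_add_le t a
  have ha : |a| ≤ |t| + |t + a| := abs_add' a t
  have ht' : |t| ≤ |a| + |t + a| := by simpa only [add_comm a t] using abs_add' t a
  rcases lt_or_ge |t| (A / 2) with hnear | hmid
  · refine le_trans ?_ (le_self_add.trans le_self_add)
    rw [indicator_of_mem (mem_Iio.2 hnear), ← ENNReal.ofReal_mul (by positivity),
      mul_comm ((A / 2) ^ (r - 1))]
    refine ENNReal.ofReal_le_ofReal (mul_le_mul_of_nonneg_left ?_ (by positivity))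
    exact Real.rpow_le_rpow_of_nonpos hA0 (by linarith) (by linarith)
  rcases lt_or_ge |t| (2 * A) with hmid' | hfar
  · refine le_trans ?_ (le_add_self.trans le_self_add)
    rw [indicator_of_mem (show |t + a| ∈ Iio (3 * A) by simp only [mem_Iio]; linarith),
      ← ENNReal.ofReal_mul (by positivity)]
    refine ENNReal.ofReal_le_ofReal (mul_le_mul ?_ ?_ (by positivity) (by positivity))
    · exact Real.rpow_le_rpow_of_nonpos hA0 hmid (by linarith)
    · exact Real.rpow_le_rpow_of_nonpos (abs_pos.2 ht) (by linarith) (by linarith)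
  · refine le_trans ?_ le_add_self
    have ht0 : 0 < |t| := by linarith
    rw [indicator_of_mem (mem_Ici.2 hfar), ← ENNReal.ofReal_mul (by positivity)]
    refine ENNReal.ofReal_le_ofReal ?_
    calc |t| ^ (s - 1) * (1 + |t + a|) ^ (r - 1)
        ≤ |t| ^ (s - 1) * (|t| / 2) ^ (r - 1) := by
          gcongr ?_ * ?_
          exact Real.rpow_le_rpow_of_nonpos (by positivity) (by linarith) (by linarith)
      _ = 2 ^ (1 - r) * |t| ^ (r + s - 1 - 1) := by
          rw [show 1 - r = -(r - 1) by ring, Real.rpow_neg zero_le_two,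
            show r + s - 1 - 1 = (s - 1) + (r - 1) by ring, Real.rpow_add ht0,
            Real.div_rpow ht0.le zero_le_two]
          ring

noncomputable def kernelConstant (r s : ℝ) : ℝ :=
  2 * (1 / (2 ^ (r + s - 1) * s) + 3 ^ r / (2 ^ (s - 1) * r) + 2 ^ s / (1 - (r + s)))

theorem kernelConstant_pos {r s : ℝ} (hr : 0 < r) (hs : 0 < s) (hrs : r + s < 1) :
    0 < kernelConstant r s := by
  have : 0 < 1 - (r + s) := by linarith
  unfold kernelConstant
  positivity

theorem lintegral_kernelMajorant {r s : ℝ} (hr : 0 < r) (hs : 0 < s) (hrs : r + s < 1) (a : ℝ) :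
    ∫⁻ t, kernelMajorant r s a t
      = ENNReal.ofReal (kernelConstant r s * (1 + |a|) ^ (r + s - 1)) := by
  set A := 1 + |a|
  have hA0 : 0 < A := by positivity
  have hnear := lintegral_indicator_Iio_rpow_abs hs (half_pos hA0).le
  have hmid : ∫⁻ t, (Iio (3 * A)).indicator (fun x => ENNReal.ofReal (x ^ (r - 1))) |t + a|
      = ENNReal.ofReal (2 * (3 * A) ^ r / r) := by
    rw [lintegral_add_right_eq_self (fun u => (Iio (3 * A)).indicator
      (fun x => ENNReal.ofReal (x ^ (r - 1))) |u|) a]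
    exact lintegral_indicator_Iio_rpow_abs hr (by positivity)
  have hfar := lintegral_indicator_Ici_rpow_abs (q := r + s - 1) (by linarith)
    (mul_pos two_pos hA0)
  unfold kernelMajorant
  rw [lintegral_add_left (by measurability), lintegral_add_left (by measurability),
    lintegral_const_mul' _ _ ENNReal.ofReal_ne_top,
    lintegral_const_mul' _ _ ENNReal.ofReal_ne_top,
    lintegral_const_mul' _ _ ENNReal.ofReal_ne_top, hnear, hmid, hfar,
    ← ENNReal.ofReal_mul (by positivity), ← ENNReal.ofReal_mul (by positivity),
    ← ENNReal.ofReal_mul (by positivity), ← ENNReal.ofReal_add (by positivity) (by positivity),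
    ← ENNReal.ofReal_add (by positivity) ?_]
  · congr 1
    have e1 : (A / 2) ^ (r - 1) * (A / 2) ^ s = A ^ (r + s - 1) / 2 ^ (r + s - 1) := by
      rw [← Real.rpow_add (by positivity), Real.div_rpow hA0.le zero_le_two]
      ring_nf
    have e2 : (A / 2) ^ (s - 1) * (3 * A) ^ r = 3 ^ r * A ^ (r + s - 1) / 2 ^ (s - 1) := by
      rw [Real.div_rpow hA0.le zero_le_two, Real.mul_rpow zero_le_three hA0.le,
        show r + s - 1 = (s - 1) + r by ring, Real.rpow_add hA0]
      ring
    have e3 : 2 ^ (1 - r) * (2 * A) ^ (r + s - 1) = 2 ^ s * A ^ (r + s - 1) := by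
      rw [Real.mul_rpow zero_le_two hA0.le, ← mul_assoc, ← Real.rpow_add two_pos]
      ring_nf
    calc _ = 2 * ((A / 2) ^ (r - 1) * (A / 2) ^ s) / s
          + 2 * ((A / 2) ^ (s - 1) * (3 * A) ^ r) / r
          + 2 * (2 ^ (1 - r) * (2 * A) ^ (r + s - 1)) / (1 - (r + s)) := by
          rw [show -(r + s - 1) = 1 - (r + s) by ring]
          ring
      _ = _ := by
          rw [e1, e2, e3, kernelConstant]
          ring
  · exact mul_nonneg (by positivity) (div_nonneg (by positivity) (by linarith))

/-- for `r, s ∈ ℝ` with `s > 0`, `r > 0`, `r + s < 1`, there is a constant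
`C(r,s)` such that for all `a ∈ ℝ`:
`∫ |t|^{s-1} (1+|t+a|)^{r-1} dt ≤ C(r,s) (1+|a|)^{r+s-1}`. -/
theorem integral_abs_rpow_kernel_bound
    (r s : ℝ) (hs : 0 < s) (hr : 0 < r) (hrs : r + s < 1) :
    ∃ C : ℝ, 0 < C ∧ ∀ a : ℝ,
      ∫⁻ t : ℝ, ENNReal.ofReal (|t| ^ (s - 1) * (1 + |t + a|) ^ (r - 1))
        ≤ ENNReal.ofReal (C * (1 + |a|) ^ (r + s - 1)) := by
  refine ⟨kernelConstant r s, kernelConstant_pos hr hs hrs, fun a => ?_⟩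
  rw [← lintegral_kernelMajorant hr hs hrs a]
  refine lintegral_mono_ae ?_
  filter_upwards [compl_mem_ae_iff.mpr (measure_singleton (-a))] with t ht
  exact kernel_le_kernelMajorant (by linarith) (by linarith) (eq_neg_iff_add_eq_zero.not.mp ht)
end

section
/- Let F be a totally real number field of degree n ≥ 2 with ring of integers O_F and unit group U_F. Then there exist units v_1, …, v_n ∈ U_F such that, under the embedding F → ℝ^n by the n real embeddings τ_1,…,τ_n, each v_i satisfies τ_j(v_i) ≤ 1/2 for all j ≠ i (and consequently τ_i(v_i) ≥ 2^{n−1} if v_i is totally positive of norm 1). More precisely: if V is a subgroup of totally positive units whose logarithmic image is a full lattice in the trace-zero hyperplane, then for each i there exists v ∈ V with τ_j(v) ≤ 1/2 for all j ≠ i. -/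
open scoped BigOperators

/-- let `V ⊂ (ℝ_{>0})^n` (here parametrized as the image of a multiplicative
map `v` on `ℤ^{n-1}`, modelling a group of totally positive units of a totally real field
embedded in `ℝ^n` by its `n` real embeddings) be a subgroup whose logarithmic image is a
full lattice of rank `n-1` in the trace-zero hyperplane. Then for every index `i` there is
a `v ∈ V` with `v_j ≤ 1/2` for all `j ≠ i`, and consequently `v_i ≥ 2^{n-1}`. -/
theorem exists_unit_small_off_coordinate
    (n : ℕ) (hn : 2 ≤ n)
    (v : (Fin (n - 1) → ℤ) → (Fin n → ℝ))
    (hpos : ∀ k i, 0 < v k i)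
    (hmul : ∀ k l, v (k + l) = v k * v l)
    (htrace : ∀ k, ∑ i, Real.log (v k i) = 0)
    (hind : LinearIndependent ℝ
      (fun j : Fin (n - 1) => fun i : Fin n => Real.log (v (Pi.single j 1) i))) :
    ∀ i : Fin n, ∃ k : Fin (n - 1) → ℤ,
      (∀ j : Fin n, j ≠ i → v k j ≤ 1 / 2) ∧ (2 : ℝ) ^ (n - 1) ≤ v k i := by
  intro i
  set L : Fin (n - 1) → Fin n → ℝ :=
    fun j => fun i => Real.log (v (Pi.single j 1) i) with hLdef
  -- v 0 = 1
  have hv1 : ∀ i', v 0 i' = 1 := by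
    intro i'
    have h := congrFun (hmul 0 0) i'
    simp only [add_zero, Pi.mul_apply] at h
    nlinarith [hpos 0 i']
  -- log ∘ v is an additive hom
  let φ : (Fin (n - 1) → ℤ) →+ (Fin n → ℝ) :=
    { toFun := fun k => fun i' => Real.log (v k i')
      map_zero' := by funext i'; simp [hv1]
      map_add' := by
        intro k l
        funext i'
        have h := congrFun (hmul k l) i'
        simp only [Pi.mul_apply] at h
        simp only [Pi.add_apply, h,
          Real.log_mul (hpos k i').ne' (hpos l i').ne'] }
  have hφ : ∀ (k : Fin (n - 1) → ℤ) (i' : Fin n), φ k i' = Real.log (v k i') := fun _ _ => rfl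
  -- expansion of log v k in terms of L
  have hexp : ∀ (k : Fin (n - 1) → ℤ) (i' : Fin n),
      Real.log (v k i') = ∑ j, (k j : ℝ) * L j i' := by
    intro k i'
    have hk : k = ∑ j, (k j) • Pi.single j (1 : ℤ) := by
      funext j'
      rw [Finset.sum_apply]
      simp [Pi.single_apply, Finset.sum_ite_eq']
    have h1 : φ k = ∑ j, (k j) • φ (Pi.single j 1) := by
      conv_lhs => rw [hk]
      rw [map_sum]
      exact Finset.sum_congr rfl fun j _ => map_zsmul φ _ _
    have h2 := congrFun h1 i'
    rw [hφ] at h2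
    rw [h2, Finset.sum_apply]
    exact Finset.sum_congr rfl fun j _ => by
      simp [hφ, zsmul_eq_mul, hLdef]
  -- the sum linear map
  let S : (Fin n → ℝ) →ₗ[ℝ] ℝ :=
    { toFun := fun x => ∑ i', x i'
      map_add' := by intro x y; simp [Finset.sum_add_distrib]
      map_smul' := by intro c x; simp [Finset.mul_sum] }
  have hSrange : LinearMap.range S = ⊤ := by
    rw [LinearMap.range_eq_top]
    intro r
    refine ⟨Pi.single i r, ?_⟩
    show ∑ i', Pi.single i r i' = r
    simp [Pi.single_apply]
  have hfrk : Module.finrank ℝ (LinearMap.ker S) = n - 1 := by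
    have h := LinearMap.finrank_range_add_finrank_ker S
    rw [hSrange] at h
    rw [finrank_top, Module.finrank_self] at h
    have hd : Module.finrank ℝ (Fin n → ℝ) = n := by simp
    omega
  have hLker : ∀ j, L j ∈ LinearMap.ker S := by
    intro j
    exact htrace (Pi.single j 1)
  have hspan : Submodule.span ℝ (Set.range L) = LinearMap.ker S := by
    refine Submodule.eq_of_le_of_finrank_le ?_ ?_
    · rw [Submodule.span_le]
      rintro x ⟨j, rfl⟩
      exact hLker j
    · rw [hfrk, finrank_span_eq_card hind]
      simp
  -- the target vector w
  set w : Fin n → ℝ := fun i' => if i' = i then (n : ℝ) - 1 else -1 with hwdef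
  have hwker : w ∈ LinearMap.ker S := by
    show ∑ i', w i' = 0
    rw [← Finset.sum_erase_add _ _ (Finset.mem_univ i)]
    have h1 : w i = (n : ℝ) - 1 := by simp [hwdef]
    have h2 : ∑ i' ∈ Finset.univ.erase i, w i' = -((n : ℝ) - 1) := by
      have heach : ∀ x ∈ Finset.univ.erase i, w x = -1 := fun x hx => by
        simp [hwdef, Finset.ne_of_mem_erase hx]
      rw [Finset.sum_congr rfl heach, Finset.sum_const,
        Finset.card_erase_of_mem (Finset.mem_univ i), Finset.card_univ, Fintype.card_fin,
        nsmul_eq_mul, Nat.cast_sub (by omega)]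
      ring
    rw [h1, h2]; ring
  have hwspan : w ∈ Submodule.span ℝ (Set.range L) := by rw [hspan]; exact hwker
  obtain ⟨c, hc⟩ := (Submodule.mem_span_range_iff_exists_fun ℝ).mp hwspan
  -- bound on the L's
  set B : ℝ := ∑ j, ∑ i'', |L j i''| with hBdef
  have hB0 : 0 ≤ B := Finset.sum_nonneg fun j _ =>
    Finset.sum_nonneg fun i'' _ => abs_nonneg _
  set t : ℝ := B + Real.log 2 with htdef
  set k : Fin (n - 1) → ℤ := fun j => round (t * c j) with hkdef
  have key : ∀ j' : Fin n, j' ≠ i → Real.log (v k j') ≤ -Real.log 2 := by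
      intro j' hj'
      have hcL : ∑ j, c j * L j j' = w j' := by
        have := congrFun hc j'
        rw [Finset.sum_apply] at this
        simpa [smul_eq_mul] using this
      have hwj' : w j' = -1 := by simp [hwdef, hj']
      have hsplit : Real.log (v k j')
          = t * w j' + ∑ j, ((k j : ℝ) - t * c j) * L j j' := by
        rw [hexp k j', ← hcL]
        rw [Finset.mul_sum, ← Finset.sum_add_distrib]
        exact Finset.sum_congr rfl fun j _ => by ring
      have herr : ∑ j, ((k j : ℝ) - t * c j) * L j j' ≤ B := by
        calc ∑ j, ((k j : ℝ) - t * c j) * L j j'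
            ≤ ∑ j, |((k j : ℝ) - t * c j) * L j j'| :=
              Finset.sum_le_sum fun j _ => le_abs_self _
          _ ≤ ∑ j, |L j j'| := by
              refine Finset.sum_le_sum fun j _ => ?_
              rw [abs_mul]
              have h1 : |(k j : ℝ) - t * c j| ≤ 1 / 2 := by
                have := abs_sub_round (t * c j)
                rw [hkdef]
                rw [abs_sub_comm] at this
                linarith
              nlinarith [abs_nonneg (L j j'), abs_nonneg ((k j : ℝ) - t * c j)]
          _ ≤ B := by
              rw [hBdef]
              refine Finset.sum_le_sum fun j _ => ?_
              exact Finset.single_le_sum (f := fun i'' => |L j i''|)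
                (fun i'' _ => abs_nonneg _) (Finset.mem_univ j')
      rw [hsplit, hwj']
      rw [htdef]
      linarith
  refine ⟨k, ?_, ?_⟩
  · intro j' hj'
    have h := key j' hj'
    have h2 : Real.log (v k j') ≤ Real.log (1 / 2) := by
      rw [one_div, Real.log_inv]
      exact h
    exact (Real.log_le_log_iff (hpos k j') (by norm_num)).mp h2
  · -- the large coordinate
    have hsum := htrace k
    rw [← Finset.sum_erase_add _ _ (Finset.mem_univ i)] at hsum
    have hbound : ∑ i' ∈ Finset.univ.erase i, Real.log (v k i')
        ≤ -(((n : ℝ) - 1) * Real.log 2) := by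
      have hcard : (Finset.univ.erase i).card = n - 1 := by
        rw [Finset.card_erase_of_mem (Finset.mem_univ i), Finset.card_univ]
        simp
      calc ∑ i' ∈ Finset.univ.erase i, Real.log (v k i')
          ≤ ∑ _i' ∈ Finset.univ.erase i, (-Real.log 2) := by
            exact Finset.sum_le_sum fun i' hi' =>
              key i' (Finset.ne_of_mem_erase hi')
        _ = -(((n : ℝ) - 1) * Real.log 2) := by
            rw [Finset.sum_const, hcard, nsmul_eq_mul]
            rw [Nat.cast_sub (by omega)]
            ring
    have hlog : ((n : ℝ) - 1) * Real.log 2 ≤ Real.log (v k i) := by linarith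
    have h2 : Real.log ((2 : ℝ) ^ (n - 1)) ≤ Real.log (v k i) := by
      rw [Real.log_pow, Nat.cast_sub (by omega)]
      simpa using hlog
    exact (Real.log_le_log_iff (by positivity) (hpos k i)).mp h2
end

section
/- Let V be a subgroup of (ℝ_{>0})^n whose logarithmic image is a full lattice in the trace-zero hyperplane, and set 𝒞 = {x ∈ (ℝ_{>0})^n : Tr(x) < Tr(vx) for all v ∈ V, v ≠ 1}. Then: (a) the translates v𝒞, v ∈ V, are pairwise disjoint; (b) there exists δ > 0 such that x_i ≥ δ·Tr(x) for every x ∈ 𝒞 and every 1 ≤ i ≤ n; (c) the set (ℝ_{>0})^n ∖ ⋃_{v∈V} v𝒞 is contained in the countable union of the hyperplanes {x : Tr(vx) = Tr(wx)}, v ≠ w ∈ V, hence has Lebesgue measure zero. -/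
/-!
Write the units as `v k = exp ∘ L k` for an additive map `L : ℤ^{n-1} → ℝ^n` whose image is a
lattice in the trace-zero hyperplane.

(a) If `v_k x = v_{k'} y` with `x, y ∈ 𝒞`, then `y = v_{k-k'} x` and `x = v_{k'-k} y`, so
`Tr x < Tr y < Tr x`.

(b) The lattice is cocompact in the hyperplane, so a lattice point near `s (n e_i - 𝟙)` is, for
large `s`, a unit whose coordinates off `i` are at most `1/2`; testing `x ∈ 𝒞` against it gives
`Tr x < 2 v_i x_i`.

(c) The lattice is discrete and `∏ v_i = 1`, so `k ↦ Tr (v_k x)` has finite sublevel sets. If it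
is injective it has a strict minimum at some `k₀`, and then `v_{k₀} x ∈ 𝒞`. Hyperplanes are null.
-/

open Real Finset Function MeasureTheory

section IntegerCombinations

variable {κ E : Type*} [Fintype κ]

theorem AddMonoidHom.apply_eq_sum_intCast_smul {R : Type*} [Ring R] [DecidableEq κ]
    [AddCommGroup E] [Module R E] (L : (κ → ℤ) →+ E) (k : κ → ℤ) :
    L k = ∑ j, (k j : R) • L (Pi.single j 1) := by
  conv_lhs => rw [← Finset.univ_sum_single k]
  simp only [map_sum, Int.cast_smul_eq_zsmul, ← map_zsmul, ← Pi.single_smul, smul_eq_mul, mul_one]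

theorem exists_intCast_sum_smul_sub_le [SeminormedAddCommGroup E] [NormedSpace ℝ E]
    (w : κ → E) (c : κ → ℝ) :
    ∃ k : κ → ℤ, ‖∑ j, (k j : ℝ) • w j - ∑ j, c j • w j‖ ≤ ∑ j, ‖w j‖ := by
  refine ⟨fun j => ⌊c j⌋, ?_⟩
  rw [← Finset.sum_sub_distrib]
  refine (norm_sum_le _ _).trans (Finset.sum_le_sum fun j _ => ?_)
  rw [← sub_smul, norm_smul, Real.norm_eq_abs, abs_sub_comm, Int.self_sub_floor,
    abs_of_nonneg (Int.fract_nonneg _)]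
  exact mul_le_of_le_one_left (norm_nonneg _) (Int.fract_lt_one _).le

theorem LinearIndependent.finite_setOf_norm_intCast_sum_smul_le [NormedAddCommGroup E]
    [NormedSpace ℝ E] {w : κ → E} (hw : LinearIndependent ℝ w) (B : ℝ) :
    {k : κ → ℤ | ‖∑ j, (k j : ℝ) • w j‖ ≤ B}.Finite := by
  obtain ⟨K, -, hK⟩ := (Fintype.linearCombination ℝ w).exists_antilipschitzWith
    (LinearMap.ker_eq_bot.mpr hw.fintypeLinearCombination_injective)
  refine (Set.Finite.pi fun _ => Set.finite_Icc (-⌈K * B⌉) ⌈K * B⌉).subset fun k hk j _ => ?_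
  have hnorm : ‖fun j => (k j : ℝ)‖ ≤ K * B :=
    calc _ ≤ K * ‖Fintype.linearCombination ℝ w fun j => (k j : ℝ)‖ :=
          hK.le_mul_norm (map_zero _) _
      _ ≤ K * B := by
          rw [Fintype.linearCombination_apply]
          exact mul_le_mul_of_nonneg_left hk K.2
  have hk_abs (j : κ) : |(k j : ℝ)| ≤ ⌈K * B⌉ :=
    ((norm_le_pi_norm _ j).trans hnorm).trans (Int.le_ceil _)
  exact ⟨by exact_mod_cast (abs_le.mp (hk_abs j)).1, by exact_mod_cast (abs_le.mp (hk_abs j)).2⟩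

theorem LinearIndependent.span_eq_ker {K V : Type*} [Field K] [AddCommGroup V] [Module K V]
    [FiniteDimensional K V] {w : κ → V} (hw : LinearIndependent K w) {f : Module.Dual K V}
    (hf : f ≠ 0) (hwf : ∀ j, f (w j) = 0) (hdim : Module.finrank K V = Fintype.card κ + 1) :
    Submodule.span K (Set.range w) = LinearMap.ker f := by
  refine Submodule.eq_of_le_of_finrank_le (Submodule.span_le.mpr ?_) ?_
  · rintro _ ⟨j, rfl⟩
    exact hwf j
  · have := Module.Dual.finrank_ker_add_one_of_ne_zero hf
    rw [finrank_span_eq_card hw]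
    omega

theorem AddMonoidHom.injective_of_linearIndependent [DecidableEq κ] [AddCommGroup E] [Module ℝ E]
    (L : (κ → ℤ) →+ E) (hind : LinearIndependent ℝ fun j => L (Pi.single j 1)) :
    Injective L :=
  (injective_iff_map_eq_zero L).2 fun k hk => funext fun j => by
    exact_mod_cast Fintype.linearIndependent_iff.mp hind (fun j => (k j : ℝ))
      (by rw [← L.apply_eq_sum_intCast_smul]; exact hk) j

end IntegerCombinations

theorem norm_le_card_mul_of_sum_eq_zero {ι : Type*} [Fintype ι] {y : ι → ℝ} {a : ℝ}
    (hsum : ∑ i, y i = 0) (hle : ∀ i, y i ≤ a) : ‖y‖ ≤ Fintype.card ι * a := by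
  classical
  have hcard_mul : 0 ≤ Fintype.card ι * a := by
    simpa [hsum] using Finset.sum_le_sum fun i (_ : i ∈ univ) => hle i
  refine (pi_norm_le_iff_of_nonneg hcard_mul).2 fun i => ?_
  have hcard : ((univ.erase i).card : ℝ) + 1 = Fintype.card ι := by
    exact_mod_cast card_erase_add_one (mem_univ i)
  have ha : 0 ≤ a := by nlinarith [hle i]
  have hrest : ∑ j ∈ univ.erase i, y j ≤ (univ.erase i).card * a := by
    simpa using Finset.sum_le_sum fun j (_ : j ∈ univ.erase i) => hle j
  have hsplit := add_sum_erase univ y (mem_univ i)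
  rw [Real.norm_eq_abs, abs_le]
  constructor <;> nlinarith [hle i]

theorem volume_setOf_sum_mul_eq_sum_mul {ι : Type*} [Fintype ι] {a b : ι → ℝ} (hab : a ≠ b) :
    volume {x : ι → ℝ | ∑ i, a i * x i = ∑ i, b i * x i} = 0 := by
  classical
  have hset : {x : ι → ℝ | ∑ i, a i * x i = ∑ i, b i * x i} =
      LinearMap.ker (Fintype.linearCombination ℝ (a - b)) := by
    ext x
    simp [Fintype.linearCombination_apply, sub_eq_zero, mul_sub, mul_comm]
  obtain ⟨i, hi⟩ := Function.ne_iff.mp hab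
  rw [hset]
  refine Measure.addHaar_submodule _ _ fun h => hi ?_
  have := LinearMap.mem_ker.mp (h ▸ Submodule.mem_top : Pi.single i 1 ∈ _)
  simpa [Fintype.linearCombination_apply, Pi.single_apply, sub_eq_zero] using this

theorem sum_lt_two_mul_of_sum_lt_sum_mul {ι : Type*} [Fintype ι] {u x : ι → ℝ} {i : ι}
    (hx : ∀ j, 0 ≤ x j) (hu : ∀ j ≠ i, u j ≤ 1 / 2) (h : ∑ j, x j < ∑ j, u j * x j) :
    ∑ j, x j < 2 * (u i * x i) := by
  classical
  have hrest : ∑ j ∈ univ.erase i, u j * x j ≤ ∑ j ∈ univ.erase i, 1 / 2 * x j :=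
    sum_le_sum fun j hj => mul_le_mul_of_nonneg_right (hu j (ne_of_mem_erase hj)) (hx j)
  rw [← mul_sum] at hrest
  have := add_sum_erase univ (fun j => u j * x j) (mem_univ i)
  have := add_sum_erase univ x (mem_univ i)
  linarith [hx i]

section Units

variable {ι Λ : Type*} [AddGroup Λ] (L : Λ →+ (ι → ℝ))

theorem exp_mul_exp_mul (k l : Λ) (x : ι → ℝ) (i : ι) :
    exp (L k i) * (exp (L l i) * x i) = exp (L (k + l) i) * x i := by
  rw [map_add, Pi.add_apply, exp_add, mul_assoc]

theorem exp_mul_exp_neg_mul (k : Λ) (x : ι → ℝ) (i : ι) :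
    exp (L (-k) i) * (exp (L k i) * x i) = x i := by
  rw [exp_mul_exp_mul, neg_add_cancel, map_zero, Pi.zero_apply, exp_zero, one_mul]

variable [Fintype ι]

def shintaniCone : Set (ι → ℝ) :=
  {x | (∀ i, 0 < x i) ∧ ∀ k ≠ 0, ∑ i, x i < ∑ i, exp (L k i) * x i}

theorem sum_lt_sum_of_exp_mul_eq {x y : ι → ℝ} (hx : x ∈ shintaniCone L) {k k' : Λ}
    (hk : k ≠ k') (hxy : ∀ i, exp (L k i) * x i = exp (L k' i) * y i) :
    ∑ i, x i < ∑ i, y i := by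
  have hy (i : ι) : y i = exp (L (-k' + k) i) * x i := by
    rw [← exp_mul_exp_mul, hxy, exp_mul_exp_neg_mul]
  simpa only [hy] using hx.2 (-k' + k) (neg_add_eq_zero.not.mpr hk.symm)

theorem pairwise_disjoint_image_shintaniCone :
    Pairwise (Disjoint on (fun k => (fun x i => exp (L k i) * x i) '' shintaniCone L)) := by
  intro k k' hk
  rw [Function.onFun, Set.disjoint_left]
  rintro _ ⟨x, hx, rfl⟩ ⟨y, hy, hyx⟩
  have hyx' (i : ι) := congrFun hyx i
  exact (sum_lt_sum_of_exp_mul_eq L hx hk fun i => (hyx' i).symm).asymm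
    (sum_lt_sum_of_exp_mul_eq L hy hk.symm hyx')

theorem mem_iUnion_image_shintaniCone {x : ι → ℝ} (hx : ∀ i, 0 < x i) {k₀ : Λ}
    (hk₀ : ∀ k ≠ k₀, ∑ i, exp (L k₀ i) * x i < ∑ i, exp (L k i) * x i) :
    x ∈ ⋃ k, (fun y i => exp (L k i) * y i) '' shintaniCone L := by
  refine Set.mem_iUnion.mpr ⟨-k₀, fun i => exp (L k₀ i) * x i,
    ⟨fun i => by have := hx i; positivity, fun k hk => ?_⟩, funext (exp_mul_exp_neg_mul L k₀ x)⟩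
  simp only [exp_mul_exp_mul]
  exact hk₀ _ fun h => hk (add_eq_right.mp h)

end Units

section Lattice

variable {ι κ : Type*} [Fintype ι] [Fintype κ] [DecidableEq κ] (L : (κ → ℤ) →+ (ι → ℝ))

theorem exists_forall_ne_le_neg (htrace : ∀ k, ∑ i, L k i = 0)
    (hind : LinearIndependent ℝ fun j => L (Pi.single j 1))
    (hcard : Fintype.card ι = Fintype.card κ + 1) (i : ι) (c : ℝ) :
    ∃ k, ∀ j ≠ i, L k j ≤ -c := by
  classical
  set w := fun j => L (Pi.single j 1)
  set s := ∑ j, ‖w j‖ + c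
  let tr : Module.Dual ℝ (ι → ℝ) := ∑ j, LinearMap.proj j
  have htr (x : ι → ℝ) : tr x = ∑ j, x j := by simp [tr]
  have hspan : Submodule.span ℝ (Set.range w) = LinearMap.ker tr :=
    hind.span_eq_ker (fun h => by simpa [htr] using LinearMap.congr_fun h (Pi.single i 1))
      (fun j => (htr _).trans (htrace _)) (by simpa using hcard)
  set t : ι → ℝ := s • (Pi.single i (Fintype.card ι : ℝ) - 1)
  have ht : t ∈ Submodule.span ℝ (Set.range w) := by
    rw [hspan, LinearMap.mem_ker, htr]
    simp [t, ← mul_sum, sum_sub_distrib]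
  obtain ⟨a, ha⟩ := (Submodule.mem_span_range_iff_exists_fun ℝ).mp ht
  obtain ⟨k, hk⟩ := exists_intCast_sum_smul_sub_le w a
  rw [← L.apply_eq_sum_intCast_smul, ha] at hk
  refine ⟨k, fun j hj => ?_⟩
  have hkj := (le_abs_self _).trans ((norm_le_pi_norm (L k - t) j).trans hk)
  have htj : t j = -s := by simp [t, hj]
  rw [Pi.sub_apply, htj] at hkj
  linarith

theorem finite_setOf_sum_exp_mul_le (htrace : ∀ k, ∑ i, L k i = 0)
    (hind : LinearIndependent ℝ fun j => L (Pi.single j 1)) [Nonempty ι] {x : ι → ℝ}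
    (hx : ∀ i, 0 < x i) (R : ℝ) :
    {k | ∑ i, exp (L k i) * x i ≤ R}.Finite := by
  obtain ⟨i₀, hi₀⟩ := Finite.exists_min x
  refine (hind.finite_setOf_norm_intCast_sum_smul_le
    (Fintype.card ι * log (R / x i₀))).subset fun k hk => ?_
  change ‖∑ j, (k j : ℝ) • L (Pi.single j 1)‖ ≤ _
  rw [← L.apply_eq_sum_intCast_smul]
  refine norm_le_card_mul_of_sum_eq_zero (htrace k) fun i => ?_
  have hterm : exp (L k i) * x i₀ ≤ R :=
    calc exp (L k i) * x i₀ ≤ exp (L k i) * x i := by gcongr; exact hi₀ i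
      _ ≤ ∑ j, exp (L k j) * x j :=
          single_le_sum (f := fun j => exp (L k j) * x j)
            (fun j _ => by have := hx j; positivity) (mem_univ i)
      _ ≤ R := hk
  rw [← le_div_iff₀ (hx i₀)] at hterm
  exact (le_log_iff_exp_le ((exp_pos _).trans_le hterm)).mpr hterm

theorem exists_pos_mul_sum_le_of_mem_shintaniCone [Nontrivial ι] (htrace : ∀ k, ∑ i, L k i = 0)
    (hind : LinearIndependent ℝ fun j => L (Pi.single j 1))
    (hcard : Fintype.card ι = Fintype.card κ + 1) :
    ∃ δ : ℝ, 0 < δ ∧ ∀ x ∈ shintaniCone L, ∀ i, δ * ∑ j, x j ≤ x i := by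
  have hunit (i : ι) : ∃ k ≠ 0, ∀ j ≠ i, exp (L k j) ≤ 1 / 2 := by
    obtain ⟨k, hk⟩ := exists_forall_ne_le_neg L htrace hind hcard i 1
    obtain ⟨j₀, hj₀⟩ := exists_ne i
    refine ⟨k, fun hk0 => ?_, fun j hj => ?_⟩
    · have := hk j₀ hj₀
      rw [hk0, map_zero, Pi.zero_apply] at this
      norm_num at this
    · calc exp (L k j) ≤ exp (-1) := exp_le_exp.mpr (hk j hj)
        _ ≤ 1 / 2 := by
          rw [exp_neg, inv_eq_one_div]
          exact one_div_le_one_div_of_le two_pos (by linarith [add_one_le_exp 1])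
  choose u hu0 hu using hunit
  obtain ⟨i₀, hi₀⟩ := Finite.exists_min fun i => 1 / (2 * exp (L (u i) i))
  refine ⟨1 / (2 * exp (L (u i₀) i₀)), by positivity, fun x hx i => ?_⟩
  have hlt := sum_lt_two_mul_of_sum_lt_sum_mul (fun j => (hx.1 j).le) (hu i) (hx.2 _ (hu0 i))
  calc _ ≤ 1 / (2 * exp (L (u i) i)) * ∑ j, x j :=
        mul_le_mul_of_nonneg_right (hi₀ i) (sum_nonneg fun j _ => (hx.1 j).le)
    _ ≤ x i := by
        rw [div_mul_eq_mul_div, one_mul, div_le_iff₀ (by positivity)]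
        linarith

theorem diff_iUnion_image_shintaniCone_subset [Nonempty ι] (htrace : ∀ k, ∑ i, L k i = 0)
    (hind : LinearIndependent ℝ fun j => L (Pi.single j 1)) :
    {x : ι → ℝ | ∀ i, 0 < x i} \ ⋃ k, (fun x i => exp (L k i) * x i) '' shintaniCone L ⊆
      ⋃ (k) (k') (_ : k ≠ k'), {x | ∑ i, exp (L k i) * x i = ∑ i, exp (L k' i) * x i} := by
  rintro x ⟨hx, hxC⟩
  by_contra hx'
  simp only [Set.mem_iUnion, Set.mem_ofPred_eq, not_exists] at hx'
  set f := fun k => ∑ i, exp (L k i) * x i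
  -- `f` is injective with finite sublevel sets, so it has a strict minimum
  obtain ⟨k₀, hk₀, hmin⟩ := Set.exists_min_image _ f
    (finite_setOf_sum_exp_mul_le L htrace hind hx (f 0)) ⟨0, le_refl (f 0)⟩
  refine hxC (mem_iUnion_image_shintaniCone L hx (k₀ := k₀) fun k hk => ?_)
  rcases le_or_gt (f k) (f 0) with hk0 | hk0
  · exact (hmin k hk0).lt_of_ne fun h => hx' k₀ k hk.symm h
  · exact (hmin 0 (le_refl (f 0))).trans_lt hk0

end Lattice

/-- let `V ⊂ (ℝ_{>0})^n` be a subgroup (parametrized as the image of a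
multiplicative map `v` on `ℤ^{n-1}`) whose logarithmic image is a full lattice of rank
`n-1` in the trace-zero hyperplane, and let
`𝒞 = {x ∈ (ℝ_{>0})^n : Tr x < Tr(wx) ∀ w ∈ V, w ≠ 1}`. Then:
(a) the translates `w𝒞`, `w ∈ V`, are pairwise disjoint;
(b) there is `δ > 0` with `x_i ≥ δ · Tr x` for all `x ∈ 𝒞` and all `i`;
(c) `(ℝ_{>0})^n ∖ ⋃_w w𝒞` is contained in the union of the hyperplanes
`{Tr(wx) = Tr(w'x)}`, `w ≠ w'` in `V`, and hence has Lebesgue measure zero. -/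
theorem shintani_fundamental_cone_properties
    (n : ℕ) (hn : 2 ≤ n)
    (v : (Fin (n - 1) → ℤ) → (Fin n → ℝ))
    (hpos : ∀ k i, 0 < v k i)
    (hmul : ∀ k l, v (k + l) = v k * v l)
    (htrace : ∀ k, ∑ i, Real.log (v k i) = 0)
    (hind : LinearIndependent ℝ
      (fun j : Fin (n - 1) => fun i : Fin n => Real.log (v (Pi.single j 1) i)))
    (C : Set (Fin n → ℝ))
    (hC : C = {x : Fin n → ℝ | (∀ i, 0 < x i) ∧
      ∀ k : Fin (n - 1) → ℤ, k ≠ 0 → ∑ i, x i < ∑ i, v k i * x i}) :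
    (∀ k k' : Fin (n - 1) → ℤ, k ≠ k' →
      Disjoint ((fun x : Fin n → ℝ => fun i => v k i * x i) '' C)
        ((fun x : Fin n → ℝ => fun i => v k' i * x i) '' C)) ∧
    (∃ δ : ℝ, 0 < δ ∧ ∀ x ∈ C, ∀ i, δ * ∑ j, x j ≤ x i) ∧
    ({x : Fin n → ℝ | ∀ i, 0 < x i} \
        ⋃ k : Fin (n - 1) → ℤ, (fun x : Fin n → ℝ => fun i => v k i * x i) '' C
      ⊆ ⋃ (k : Fin (n - 1) → ℤ) (k' : Fin (n - 1) → ℤ) (_ : k ≠ k'),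
          {x : Fin n → ℝ | ∑ i, v k i * x i = ∑ i, v k' i * x i}) ∧
    MeasureTheory.volume ({x : Fin n → ℝ | ∀ i, 0 < x i} \
        ⋃ k : Fin (n - 1) → ℤ, (fun x : Fin n → ℝ => fun i => v k i * x i) '' C) = 0 := by
  obtain ⟨L, rfl⟩ : ∃ L : (Fin (n - 1) → ℤ) →+ (Fin n → ℝ), v = fun k i => exp (L k i) :=
    ⟨AddMonoidHom.mk' (fun k i => log (v k i)) fun k l => by
        ext i; simp [hmul, log_mul (hpos k i).ne' (hpos l i).ne'],
      by ext k i; simp [exp_log (hpos k i)]⟩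
  simp only [log_exp] at htrace hind
  subst hC
  have : Nontrivial (Fin n) := Fin.nontrivial_iff_two_le.mpr hn
  have hcover := diff_iUnion_image_shintaniCone_subset L htrace hind
  refine ⟨pairwise_disjoint_image_shintaniCone L,
    exists_pos_mul_sum_le_of_mem_shintaniCone L htrace hind (by rw [Fintype.card_fin, Fintype.card_fin]; omega), hcover,
    measure_mono_null hcover <| measure_iUnion_null fun k => measure_iUnion_null fun k' =>
      measure_iUnion_null fun hk => volume_setOf_sum_mul_eq_sum_mul fun h => hk ?_⟩
  exact L.injective_of_linearIndependent hind (funext fun i => exp_injective (congrFun h i))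
end
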